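/- arXiv:1212.5896 — 2 statements merged into one kernel-verified Lean document; each statement's English description precedes it below -/
import Mathlib

section
/- Let Σ = ℝ × (0,L) and let ρ = ρ(x) be a C¹ positive weight with |ρ'(x)| ≤ c₀ ρ(x). Then there is a constant C such that ‖ψ ρ^{1/2}‖_{L⁴(Σ)}² ≤ C ( ‖|Dψ| ρ^{1/2}‖_{L²(Σ)} ‖ψ ρ^{1/2}‖_{L²(Σ)} + ‖ψ ρ^{1/2}‖_{L²(Σ)}² ) for all ψ ∈ H¹(Σ) with ψρ^{1/2}, |Dψ|ρ^{1/2} ∈ L²(Σ), where |Dψ|² = ψ_x² + ψ_y². -/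
open MeasureTheory Set

/-- On the line: a nonnegative integrable C¹ function with integrable derivative is
pointwise bounded by `∫ f + ∫ |f'|`. -/
lemma line_pointwise_bound (f f' : ℝ → ℝ) (hd : ∀ x, HasDerivAt f (f' x) x)
    (h0 : ∀ x, 0 ≤ f x) (hi : Integrable f) (hi' : Integrable f') (x : ℝ) :
    f x ≤ (∫ t, f t) + ∫ t, |f' t| := by
  have habs : Integrable (fun t => |f' t|) := hi'.abs
  have key : ∀ s ∈ Set.Ioo (x - 1) x, f x ≤ f s + ∫ t, |f' t| := by
    intro s hs
    have hsx : s ≤ x := le_of_lt hs.2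
    have hftc : ∫ t in s..x, f' t = f x - f s :=
      intervalIntegral.integral_eq_sub_of_hasDerivAt (fun t _ => hd t)
        (hi'.intervalIntegrable)
    have h1 : ∫ t in s..x, f' t ≤ ∫ t in s..x, |f' t| := by
      refine intervalIntegral.integral_mono_on hsx hi'.intervalIntegrable
        habs.intervalIntegrable ?_
      intro t _; exact le_abs_self _
    have h2 : ∫ t in s..x, |f' t| ≤ ∫ t, |f' t| := by
      rw [intervalIntegral.integral_of_le hsx]
      exact setIntegral_le_integral habs (Filter.Eventually.of_forall fun t => abs_nonneg _)
    linarith [hftc ▸ (h1.trans h2)]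
  -- integrate over s ∈ Ioo (x-1) x
  have hmeas : (volume (Set.Ioo (x - 1) x)).toReal = 1 := by
    rw [Real.volume_Ioo]; norm_num
  have hfx : f x = ∫ s in Set.Ioo (x - 1) x, f x := by
    rw [setIntegral_const, measureReal_def, hmeas, one_smul]
  have hmono : ∫ s in Set.Ioo (x - 1) x, f x ≤
      ∫ s in Set.Ioo (x - 1) x, (f s + ∫ t, |f' t|) := by
    refine setIntegral_mono_on (integrableOn_const (by
      rw [Real.volume_Ioo]; exact ENNReal.ofReal_ne_top))
      ((hi.integrableOn).add (integrableOn_const (by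
        rw [Real.volume_Ioo]; exact ENNReal.ofReal_ne_top))) measurableSet_Ioo ?_
    intro s hs; exact key s hs
  have hsplit : ∫ s in Set.Ioo (x - 1) x, (f s + ∫ t, |f' t|) =
      (∫ s in Set.Ioo (x - 1) x, f s) + ∫ t, |f' t| := by
    rw [integral_add hi.integrableOn (integrableOn_const (by
      rw [Real.volume_Ioo]; exact ENNReal.ofReal_ne_top)),
      setIntegral_const, measureReal_def, hmeas, one_smul]
  have hle : ∫ s in Set.Ioo (x - 1) x, f s ≤ ∫ t, f t :=
    setIntegral_le_integral hi (Filter.Eventually.of_forall fun t => h0 t)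
  linarith [hfx ▸ (hmono.trans_eq hsplit)]

/-- On an interval `(0, L)`: a C¹ function with continuous derivative is bounded by
`(1/L) ∫ f + ∫ |f'|` at interior points. -/

lemma interval_pointwise_bound (L : ℝ) (hL : 0 < L) (f f' : ℝ → ℝ)
    (hd : ∀ x, HasDerivAt f (f' x) x) (h0 : ∀ x, 0 ≤ f x)
    (hc' : Continuous f') {x : ℝ} (hx : x ∈ Set.Ioo 0 L) :
    f x ≤ (1 / L) * (∫ t in Set.Ioo 0 L, f t) + ∫ t in Set.Ioo 0 L, |f' t| := by
  have hc : Continuous f := by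
    have : Differentiable ℝ f := fun x => (hd x).differentiableAt
    exact this.continuous
  have hfi : IntegrableOn f (Set.Ioo 0 L) :=
    (hc.integrableOn_Icc (a := 0) (b := L)).mono_set Set.Ioo_subset_Icc_self
  have habs : IntegrableOn (fun t => |f' t|) (Set.Ioo 0 L) :=
    (hc'.abs.integrableOn_Icc (a := 0) (b := L)).mono_set Set.Ioo_subset_Icc_self
  have key : ∀ s ∈ Set.Ioo 0 L, f x ≤ f s + ∫ t in Set.Ioo 0 L, |f' t| := by
    intro s hs
    have hftc : ∫ t in s..x, f' t = f x - f s :=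
      intervalIntegral.integral_eq_sub_of_hasDerivAt (fun t _ => hd t)
        (hc'.intervalIntegrable _ _)
    have h1 : ∫ t in s..x, f' t ≤ ∫ t in Set.uIoc s x, |f' t| := by
      calc ∫ t in s..x, f' t ≤ |∫ t in s..x, f' t| := le_abs_self _
        _ ≤ ∫ t in Set.uIoc s x, |f' t| := by
            simpa [Real.norm_eq_abs] using
              intervalIntegral.norm_integral_le_integral_norm_uIoc (f := f') (a := s) (b := x)
                (μ := volume)
    have hsub : Set.uIoc s x ⊆ Set.Ioo 0 L := by
      rw [Set.uIoc_eq_union]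
      rintro t (ht | ht)
      · exact ⟨lt_of_lt_of_le hs.1 (le_of_lt ht.1), lt_of_le_of_lt ht.2 hx.2⟩
      · exact ⟨lt_of_lt_of_le hx.1 (le_of_lt ht.1), lt_of_le_of_lt ht.2 hs.2⟩
    have h2 : ∫ t in Set.uIoc s x, |f' t| ≤ ∫ t in Set.Ioo 0 L, |f' t| := by
      refine setIntegral_mono_set habs
        (Filter.Eventually.of_forall fun t => abs_nonneg _) (HasSubset.Subset.eventuallyLE hsub)
    linarith [hftc ▸ (h1.trans h2)]
  -- integrate over s
  have hmeasL : (volume (Set.Ioo (0:ℝ) L)).toReal = L := by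
    rw [Real.volume_Ioo, ENNReal.toReal_ofReal (by linarith)]; ring
  have hconst : IntegrableOn (fun _ : ℝ => f x + ∫ t in Set.Ioo 0 L, |f' t|) (Set.Ioo 0 L) :=
    integrableOn_const (by rw [Real.volume_Ioo]; exact ENNReal.ofReal_ne_top)
  have hmono : ∫ s in Set.Ioo 0 L, f x ≤
      ∫ s in Set.Ioo 0 L, (f s + ∫ t in Set.Ioo 0 L, |f' t|) := by
    refine setIntegral_mono_on (integrableOn_const (by
      rw [Real.volume_Ioo]; exact ENNReal.ofReal_ne_top))
      (hfi.add (integrableOn_const (by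
        rw [Real.volume_Ioo]; exact ENNReal.ofReal_ne_top))) measurableSet_Ioo ?_
    intro s hs; exact key s hs
  have e1 : ∫ s in Set.Ioo (0:ℝ) L, f x = L * f x := by
    rw [setIntegral_const, measureReal_def, hmeasL, smul_eq_mul]
  have e2 : ∫ s in Set.Ioo (0:ℝ) L, (f s + ∫ t in Set.Ioo 0 L, |f' t|) =
      (∫ s in Set.Ioo 0 L, f s) + L * ∫ t in Set.Ioo 0 L, |f' t| := by
    rw [integral_add hfi (integrableOn_const (by
      rw [Real.volume_Ioo]; exact ENNReal.ofReal_ne_top)),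
      setIntegral_const, measureReal_def, hmeasL, smul_eq_mul]
  rw [e1, e2] at hmono
  have h3 := mul_le_mul_of_nonneg_left hmono (le_of_lt (one_div_pos.mpr hL))
  have hLne : L ≠ 0 := ne_of_gt hL
  calc f x = (1/L) * (L * f x) := by field_simp
    _ ≤ (1/L) * ((∫ s in Set.Ioo 0 L, f s) + L * ∫ t in Set.Ioo 0 L, |f' t|) := h3
    _ = (1 / L) * (∫ t in Set.Ioo 0 L, f t) + ∫ t in Set.Ioo 0 L, |f' t| := by
        field_simp


set_option maxHeartbeats 2000000 in
theorem stmt12 (L : ℝ) (hL : 0 < L) (ρ : ℝ → ℝ) (c₀ : ℝ)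
    (hρ : ContDiff ℝ 1 ρ) (hρpos : ∀ x : ℝ, 0 < ρ x)
    (hρ' : ∀ x : ℝ, |deriv ρ x| ≤ c₀ * ρ x) :
    ∃ C : ℝ, 0 < C ∧ ∀ ψ : ℝ → ℝ → ℝ,
      ContDiff ℝ 1 (fun p : ℝ × ℝ => ψ p.1 p.2) →
      IntegrableOn (fun p : ℝ × ℝ => (ψ p.1 p.2) ^ 2 * ρ p.1)
        (Set.univ ×ˢ Set.Ioo 0 L) →
      IntegrableOn (fun p : ℝ × ℝ =>
          ((deriv (fun a => ψ a p.2) p.1) ^ 2 + (deriv (fun b => ψ p.1 b) p.2) ^ 2) * ρ p.1)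
        (Set.univ ×ˢ Set.Ioo 0 L) →
      (∫ p in (Set.univ ×ˢ Set.Ioo (0:ℝ) L : Set (ℝ × ℝ)),
          (ψ p.1 p.2) ^ 4 * (ρ p.1) ^ 2) ^ ((1:ℝ)/2)
        ≤ C * ((∫ p in (Set.univ ×ˢ Set.Ioo (0:ℝ) L : Set (ℝ × ℝ)),
              ((deriv (fun a => ψ a p.2) p.1) ^ 2 + (deriv (fun b => ψ p.1 b) p.2) ^ 2)
                * ρ p.1) ^ ((1:ℝ)/2)
            * (∫ p in (Set.univ ×ˢ Set.Ioo (0:ℝ) L : Set (ℝ × ℝ)),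
              (ψ p.1 p.2) ^ 2 * ρ p.1) ^ ((1:ℝ)/2)
          + ∫ p in (Set.univ ×ˢ Set.Ioo (0:ℝ) L : Set (ℝ × ℝ)),
              (ψ p.1 p.2) ^ 2 * ρ p.1) := by
  have hc₀ : 0 ≤ c₀ := by
    have h1 := (abs_nonneg (deriv ρ 0)).trans (hρ' 0)
    exact nonneg_of_mul_nonneg_right (by linarith [h1] : 0 ≤ ρ 0 * c₀) (hρpos 0)
  set μ : Measure ℝ := volume with hμ
  set ν : Measure ℝ := volume.restrict (Set.Ioo 0 L) with hν
  set Pm : Measure (ℝ × ℝ) := μ.prod ν with hPm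
  have hmeq : (volume : Measure (ℝ × ℝ)).restrict (Set.univ ×ˢ Set.Ioo 0 L) = Pm := by
    rw [hPm, hμ, hν, Measure.volume_eq_prod, ← Measure.prod_restrict]
    simp
  refine ⟨Real.sqrt ((2 + 1/L) * (3 + c₀)), Real.sqrt_pos.mpr (by positivity), ?_⟩
  intro ψ hψ hI2 hI3
  set Ψ : ℝ × ℝ → ℝ := fun p => ψ p.1 p.2 with hΨdef
  have hdiff : Differentiable ℝ Ψ := hψ.differentiable one_ne_zero
  set px : ℝ × ℝ → ℝ := fun p => fderiv ℝ Ψ p (1, 0) with hpxdef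
  set py : ℝ × ℝ → ℝ := fun p => fderiv ℝ Ψ p (0, 1) with hpydef
  have hdx : ∀ p : ℝ × ℝ, HasDerivAt (fun a => ψ a p.2) (px p) p.1 := by
    intro p
    have h1 : HasDerivAt (fun a : ℝ => (a, p.2)) ((1:ℝ), (0:ℝ)) p.1 :=
      (hasDerivAt_id p.1).prodMk (hasDerivAt_const p.1 p.2)
    exact ((hdiff (p.1, p.2)).hasFDerivAt.comp_hasDerivAt p.1 h1 : _)
  have hdy : ∀ p : ℝ × ℝ, HasDerivAt (fun b => ψ p.1 b) (py p) p.2 := by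
    intro p
    have h1 : HasDerivAt (fun b : ℝ => (p.1, b)) ((0:ℝ), (1:ℝ)) p.2 :=
      (hasDerivAt_const p.2 p.1).prodMk (hasDerivAt_id p.2)
    exact ((hdiff (p.1, p.2)).hasFDerivAt.comp_hasDerivAt p.2 h1 : _)
  have hx_eq : ∀ p : ℝ × ℝ, deriv (fun a => ψ a p.2) p.1 = px p := fun p => (hdx p).deriv
  have hy_eq : ∀ p : ℝ × ℝ, deriv (fun b => ψ p.1 b) p.2 = py p := fun p => (hdy p).deriv
  have hΨc : Continuous Ψ := hψ.continuous
  have hfderc : Continuous (fderiv ℝ Ψ) := hψ.continuous_fderiv one_ne_zero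
  have hpxc : Continuous px := hfderc.clm_apply continuous_const
  have hpyc : Continuous py := hfderc.clm_apply continuous_const
  have hρc : Continuous ρ := hρ.continuous
  have hρ'c : Continuous (deriv ρ) := hρ.continuous_deriv le_rfl
  have hρdiff : Differentiable ℝ ρ := hρ.differentiable one_ne_zero
  set F : ℝ × ℝ → ℝ := fun p => Ψ p ^ 2 * ρ p.1 with hFdef
  set D2 : ℝ × ℝ → ℝ := fun p => (px p ^ 2 + py p ^ 2) * ρ p.1 with hD2def
  have hFc : Continuous F := (hΨc.pow 2).mul (hρc.comp continuous_fst)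
  have hD2c : Continuous D2 :=
    ((hpxc.pow 2).add (hpyc.pow 2)).mul (hρc.comp continuous_fst)
  have hF : Integrable F Pm := by rw [← hmeq]; exact hI2
  have hD : Integrable D2 Pm := by
    rw [← hmeq]
    have : (fun p : ℝ × ℝ =>
        ((deriv (fun a => ψ a p.2) p.1) ^ 2 + (deriv (fun b => ψ p.1 b) p.2) ^ 2) * ρ p.1)
        = D2 := by
      funext p; rw [hx_eq p, hy_eq p]
    rw [← this]; exact hI3
  have hF0 : ∀ p, 0 ≤ F p := fun p => mul_nonneg (sq_nonneg _) (hρpos p.1).le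
  have hD20 : ∀ p, 0 ≤ D2 p :=
    fun p => mul_nonneg (by positivity) (hρpos p.1).le
  set gx : ℝ × ℝ → ℝ := fun p => 2 * |Ψ p| * |px p| * ρ p.1 + c₀ * F p with hgxdef
  set gy : ℝ × ℝ → ℝ := fun p => 2 * |Ψ p| * |py p| * ρ p.1 with hgydef
  have hgxc : Continuous gx :=
    ((((continuous_const.mul hΨc.abs).mul hpxc.abs).mul (hρc.comp continuous_fst)).add
      (continuous_const.mul hFc))
  have hgyc : Continuous gy :=
    ((continuous_const.mul hΨc.abs).mul hpyc.abs).mul (hρc.comp continuous_fst)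
  have hgx0 : ∀ p, 0 ≤ gx p := fun p => add_nonneg
    (mul_nonneg (mul_nonneg (by positivity) (abs_nonneg _)) (hρpos p.1).le)
    (mul_nonneg hc₀ (hF0 p))
  have hgy0 : ∀ p, 0 ≤ gy p :=
    fun p => mul_nonneg (mul_nonneg (by positivity) (abs_nonneg _)) (hρpos p.1).le
  have hgx_le : ∀ p, gx p ≤ (1 + c₀) * F p + D2 p := by
    intro p
    have h2 : 2 * |Ψ p| * |px p| ≤ Ψ p ^ 2 + px p ^ 2 := by
      nlinarith [sq_nonneg (|Ψ p| - |px p|), sq_abs (Ψ p), sq_abs (px p)]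
    have h3 : 2 * |Ψ p| * |px p| * ρ p.1 ≤ (Ψ p ^ 2 + px p ^ 2) * ρ p.1 :=
      mul_le_mul_of_nonneg_right h2 (hρpos p.1).le
    have h4 : px p ^ 2 * ρ p.1 ≤ D2 p := by
      have e : D2 p = (px p ^ 2 + py p ^ 2) * ρ p.1 := rfl
      have : 0 ≤ py p ^ 2 * ρ p.1 := mul_nonneg (sq_nonneg _) (hρpos p.1).le
      nlinarith
    have e1 : gx p = 2 * |Ψ p| * |px p| * ρ p.1 + c₀ * F p := rfl
    have e2 : F p = Ψ p ^ 2 * ρ p.1 := rfl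
    rw [e1, e2]
    nlinarith [mul_nonneg (sq_nonneg (Ψ p)) (hρpos p.1).le]
  have hgy_le : ∀ p, gy p ≤ F p + D2 p := by
    intro p
    have h2 : 2 * |Ψ p| * |py p| ≤ Ψ p ^ 2 + py p ^ 2 := by
      nlinarith [sq_nonneg (|Ψ p| - |py p|), sq_abs (Ψ p), sq_abs (py p)]
    have h3 : 2 * |Ψ p| * |py p| * ρ p.1 ≤ (Ψ p ^ 2 + py p ^ 2) * ρ p.1 :=
      mul_le_mul_of_nonneg_right h2 (hρpos p.1).le
    have h4 : py p ^ 2 * ρ p.1 ≤ D2 p := by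
      have e : D2 p = (px p ^ 2 + py p ^ 2) * ρ p.1 := rfl
      have : 0 ≤ px p ^ 2 * ρ p.1 := mul_nonneg (sq_nonneg _) (hρpos p.1).le
      nlinarith
    have e1 : gy p = 2 * |Ψ p| * |py p| * ρ p.1 := rfl
    have e2 : F p = Ψ p ^ 2 * ρ p.1 := rfl
    rw [e1, e2]
    nlinarith [mul_nonneg (sq_nonneg (Ψ p)) (hρpos p.1).le]
  have hgx : Integrable gx Pm := by
    refine Integrable.mono' ((hF.const_mul (1 + c₀)).add hD)
      hgxc.aestronglyMeasurable (Filter.Eventually.of_forall fun p => ?_)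
    rw [Real.norm_eq_abs, abs_of_nonneg (hgx0 p)]
    exact hgx_le p
  have hgy : Integrable gy Pm := by
    refine Integrable.mono' (hF.add hD)
      hgyc.aestronglyMeasurable (Filter.Eventually.of_forall fun p => ?_)
    rw [Real.norm_eq_abs, abs_of_nonneg (hgy0 p)]
    exact hgy_le p
  set u : ℝ → ℝ := fun y => (∫ x, F (x, y) ∂μ) + ∫ x, gx (x, y) ∂μ with hudef
  set w : ℝ → ℝ := fun x => (1 / L) * (∫ y, F (x, y) ∂ν) + ∫ y, gy (x, y) ∂ν with hwdef
  have hu0 : ∀ y, 0 ≤ u y := fun y => add_nonneg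
    (integral_nonneg fun x => hF0 (x, y)) (integral_nonneg fun x => hgx0 (x, y))
  have hw0 : ∀ x, 0 ≤ w x := fun x => add_nonneg
    (mul_nonneg (by positivity) (integral_nonneg fun y => hF0 (x, y)))
    (integral_nonneg fun y => hgy0 (x, y))
  -- x-direction bound
  have hu_ae : ∀ᵐ y ∂ν, ∀ x, F (x, y) ≤ u y := by
    filter_upwards [hF.prod_left_ae, hgx.prod_left_ae] with y hFy hgxy
    intro x
    set f : ℝ → ℝ := fun a => ψ a y ^ 2 * ρ a with hfdef
    set f' : ℝ → ℝ := fun a => 2 * ψ a y * px (a, y) * ρ a + ψ a y ^ 2 * deriv ρ a with hf'def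
    have hslc : Continuous (fun a : ℝ => ψ a y) :=
      hΨc.comp (continuous_id.prodMk continuous_const)
    have hpxslc : Continuous (fun a : ℝ => px (a, y)) :=
      hpxc.comp (continuous_id.prodMk continuous_const)
    have hd : ∀ a, HasDerivAt f (f' a) a := by
      intro a
      have h1 : HasDerivAt (fun t => ψ t y) (px (a, y)) a := hdx (a, y)
      have h2 : HasDerivAt (fun t => ψ t y ^ 2) (2 * ψ a y * px (a, y)) a := by
        have := h1.fun_pow 2
        simpa using this
      have := h2.mul (hρdiff a).hasDerivAt
      exact this
    have hbd : ∀ a, |f' a| ≤ gx (a, y) := by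
      intro a
      have e : gx (a, y) = 2 * |ψ a y| * |px (a, y)| * ρ a + c₀ * (ψ a y ^ 2 * ρ a) := rfl
      have h1 : |f' a| ≤ |2 * ψ a y * px (a, y) * ρ a| + |ψ a y ^ 2 * deriv ρ a| := abs_add_le _ _
      have h2 : |2 * ψ a y * px (a, y) * ρ a| = 2 * |ψ a y| * |px (a, y)| * ρ a := by
        rw [abs_mul, abs_mul, abs_mul, abs_two, abs_of_nonneg (hρpos a).le]
      have h3 : |ψ a y ^ 2 * deriv ρ a| ≤ c₀ * (ψ a y ^ 2 * ρ a) := by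
        rw [abs_mul, abs_pow, sq_abs]
        calc ψ a y ^ 2 * |deriv ρ a| ≤ ψ a y ^ 2 * (c₀ * ρ a) :=
              mul_le_mul_of_nonneg_left (hρ' a) (sq_nonneg _)
          _ = c₀ * (ψ a y ^ 2 * ρ a) := by ring
      rw [e]; rw [h2] at h1; linarith
    have hf'c : Continuous f' :=
      (((continuous_const.mul hslc).mul hpxslc).mul hρc).add ((hslc.pow 2).mul hρ'c)
    have hfi : Integrable f μ := hFy
    have hf'i : Integrable f' μ := by
      refine Integrable.mono' hgxy hf'c.aestronglyMeasurable
        (Filter.Eventually.of_forall fun a => ?_)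
      rw [Real.norm_eq_abs]; exact hbd a
    have h0 : ∀ a, 0 ≤ f a := fun a => mul_nonneg (sq_nonneg _) (hρpos a).le
    have hmain := line_pointwise_bound f f' hd h0 hfi hf'i x
    have habs_le : ∫ a, |f' a| ∂μ ≤ ∫ a, gx (a, y) ∂μ :=
      integral_mono hf'i.abs hgxy (fun a => hbd a)
    calc F (x, y) = f x := rfl
      _ ≤ (∫ a, f a ∂μ) + ∫ a, |f' a| ∂μ := hmain
      _ ≤ (∫ a, F (a, y) ∂μ) + ∫ a, gx (a, y) ∂μ := by
          exact add_le_add (le_of_eq rfl) habs_le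
      _ = u y := rfl
  -- y-direction bound
  have hw_all : ∀ x, ∀ y ∈ Set.Ioo 0 L, F (x, y) ≤ w x := by
    intro x y hy
    set h : ℝ → ℝ := fun b => ψ x b ^ 2 * ρ x with hhdef
    set h' : ℝ → ℝ := fun b => 2 * ψ x b * py (x, b) * ρ x with hh'def
    have hslc : Continuous (fun b : ℝ => ψ x b) :=
      hΨc.comp (continuous_const.prodMk continuous_id)
    have hpyslc : Continuous (fun b : ℝ => py (x, b)) :=
      hpyc.comp (continuous_const.prodMk continuous_id)
    have hd : ∀ b, HasDerivAt h (h' b) b := by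
      intro b
      have h1 : HasDerivAt (fun t => ψ x t) (py (x, b)) b := hdy (x, b)
      have h2 : HasDerivAt (fun t => ψ x t ^ 2) (2 * ψ x b * py (x, b)) b := by
        have := h1.fun_pow 2
        simpa using this
      have h3 := h2.mul_const (ρ x)
      convert h3 using 1
    have hh'c : Continuous h' := ((continuous_const.mul hslc).mul hpyslc).mul continuous_const
    have h0 : ∀ b, 0 ≤ h b := fun b => mul_nonneg (sq_nonneg _) (hρpos x).le
    have hbd : ∀ b, |h' b| ≤ gy (x, b) := by
      intro b
      have e : gy (x, b) = 2 * |ψ x b| * |py (x, b)| * ρ x := rfl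
      rw [e, hh'def]
      calc |2 * ψ x b * py (x, b) * ρ x| = 2 * |ψ x b| * |py (x, b)| * ρ x := by
            rw [abs_mul, abs_mul, abs_mul, abs_two, abs_of_nonneg (hρpos x).le]
        _ ≤ 2 * |ψ x b| * |py (x, b)| * ρ x := le_refl _
    have hmain := interval_pointwise_bound L hL h h' hd h0 hh'c hy
    have habs_le : ∫ b in Set.Ioo 0 L, |h' b| ≤ ∫ b, gy (x, b) ∂ν := by
      have hgyint : Integrable (fun b => gy (x, b)) ν :=
        ((hgyc.comp (continuous_const.prodMk continuous_id)).integrableOn_Icc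
          (a := 0) (b := L)).mono_set Set.Ioo_subset_Icc_self
      have hh'int : Integrable (fun b => |h' b|) ν :=
        (hh'c.abs.integrableOn_Icc (a := 0) (b := L)).mono_set Set.Ioo_subset_Icc_self
      exact integral_mono hh'int hgyint (fun b => hbd b)
    calc F (x, y) = h y := rfl
      _ ≤ (1 / L) * (∫ b in Set.Ioo 0 L, h b) + ∫ b in Set.Ioo 0 L, |h' b| := hmain
      _ ≤ (1 / L) * (∫ b, F (x, b) ∂ν) + ∫ b, gy (x, b) ∂ν := by
          refine add_le_add (le_of_eq ?_) habs_le
          rfl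
      _ = w x := rfl
  -- lift to the product measure
  have hsnd : Measure.QuasiMeasurePreserving (Prod.snd : ℝ × ℝ → ℝ) Pm ν :=
    Measure.quasiMeasurePreserving_snd
  have hu_prod : ∀ᵐ p ∂Pm, F p ≤ u p.2 := by
    filter_upwards [hsnd.ae hu_ae] with p hp
    simpa using hp p.1
  have hmemIoo : ∀ᵐ y ∂ν, y ∈ Set.Ioo 0 L := by
    rw [hν]; exact ae_restrict_mem measurableSet_Ioo
  have hw_prod : ∀ᵐ p ∂Pm, F p ≤ w p.1 := by
    filter_upwards [hsnd.ae hmemIoo] with p hp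
    simpa using hw_all p.1 p.2 hp
  have hprod_le : ∀ᵐ p ∂Pm, F p ^ 2 ≤ w p.1 * u p.2 := by
    filter_upwards [hu_prod, hw_prod] with p h1 h2
    nlinarith [hF0 p, hw0 p.1, hu0 p.2]
  have hwInt : Integrable w μ :=
    ((hF.integral_prod_left).const_mul (1 / L)).add (hgy.integral_prod_left)
  have huInt : Integrable u ν :=
    (hF.integral_prod_right).add (hgx.integral_prod_right)
  have key : ∫ p, F p ^ 2 ∂Pm ≤ (∫ x, w x ∂μ) * (∫ y, u y ∂ν) := by
    by_cases hint : Integrable (fun p => F p ^ 2) Pm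
    · calc ∫ p, F p ^ 2 ∂Pm ≤ ∫ p, w p.1 * u p.2 ∂Pm :=
            integral_mono_ae hint (hwInt.mul_prod huInt) hprod_le
        _ = (∫ x, w x ∂μ) * (∫ y, u y ∂ν) := integral_prod_mul w u
    · rw [integral_undef hint]
      exact mul_nonneg (integral_nonneg hw0) (integral_nonneg hu0)
  set A : ℝ := ∫ p, D2 p ∂Pm with hA
  set B : ℝ := ∫ p, F p ∂Pm with hB
  have hA0 : 0 ≤ A := integral_nonneg hD20
  have hB0 : 0 ≤ B := integral_nonneg hF0
  -- Fubini identities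
  have hIw : ∫ x, w x ∂μ = (1 / L) * B + ∫ p, gy p ∂Pm := by
    rw [hwdef]
    rw [integral_add ((hF.integral_prod_left).const_mul (1 / L)) (hgy.integral_prod_left),
      integral_const_mul, ← integral_prod F hF, ← integral_prod gy hgy]
  have hIu : ∫ y, u y ∂ν = B + ∫ p, gx p ∂Pm := by
    rw [hudef]
    rw [integral_add (hF.integral_prod_right) (hgx.integral_prod_right),
      ← integral_prod_symm F hF, ← integral_prod_symm gx hgx]
  -- Cauchy–Schwarz
  set φ1 : ℝ × ℝ → ℝ := fun p => |Ψ p| * Real.sqrt (ρ p.1) with hφ1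
  set φx : ℝ × ℝ → ℝ := fun p => |px p| * Real.sqrt (ρ p.1) with hφx
  set φy : ℝ × ℝ → ℝ := fun p => |py p| * Real.sqrt (ρ p.1) with hφy
  have hsqrtc : Continuous (fun p : ℝ × ℝ => Real.sqrt (ρ p.1)) :=
    Real.continuous_sqrt.comp (hρc.comp continuous_fst)
  have hφ1c : Continuous φ1 := hΨc.abs.mul hsqrtc
  have hφxc : Continuous φx := hpxc.abs.mul hsqrtc
  have hφyc : Continuous φy := hpyc.abs.mul hsqrtc
  have hφ1sq : ∀ p, φ1 p ^ 2 = F p := by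
    intro p
    rw [hφ1]
    simp only
    rw [mul_pow, sq_abs, Real.sq_sqrt (hρpos p.1).le]
  have hφxsq : ∀ p, φx p ^ 2 = px p ^ 2 * ρ p.1 := by
    intro p; rw [hφx]; simp only
    rw [mul_pow, sq_abs, Real.sq_sqrt (hρpos p.1).le]
  have hφysq : ∀ p, φy p ^ 2 = py p ^ 2 * ρ p.1 := by
    intro p; rw [hφy]; simp only
    rw [mul_pow, sq_abs, Real.sq_sqrt (hρpos p.1).le]
  have hφ1m : MemLp φ1 2 Pm := by
    rw [memLp_two_iff_integrable_sq hφ1c.aestronglyMeasurable]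
    exact hF.congr (Filter.Eventually.of_forall fun p => (hφ1sq p).symm)
  have hφxm : MemLp φx 2 Pm := by
    rw [memLp_two_iff_integrable_sq hφxc.aestronglyMeasurable]
    refine Integrable.mono' hD ((hφxc.pow 2).aestronglyMeasurable)
      (Filter.Eventually.of_forall fun p => ?_)
    rw [Real.norm_eq_abs, abs_of_nonneg (sq_nonneg _), hφxsq p]
    have : 0 ≤ py p ^ 2 * ρ p.1 := mul_nonneg (sq_nonneg _) (hρpos p.1).le
    have e : D2 p = (px p ^ 2 + py p ^ 2) * ρ p.1 := rfl
    nlinarith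
  have hφym : MemLp φy 2 Pm := by
    rw [memLp_two_iff_integrable_sq hφyc.aestronglyMeasurable]
    refine Integrable.mono' hD ((hφyc.pow 2).aestronglyMeasurable)
      (Filter.Eventually.of_forall fun p => ?_)
    rw [Real.norm_eq_abs, abs_of_nonneg (sq_nonneg _), hφysq p]
    have : 0 ≤ px p ^ 2 * ρ p.1 := mul_nonneg (sq_nonneg _) (hρpos p.1).le
    have e : D2 p = (px p ^ 2 + py p ^ 2) * ρ p.1 := rfl
    nlinarith
  have hconj : Real.HolderConjugate 2 2 := Real.HolderConjugate.two_two
  have hCS : ∀ (φ : ℝ × ℝ → ℝ), MemLp φ 2 Pm → (∀ p, 0 ≤ φ p) →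
      (∫ p, φ p ^ 2 ∂Pm ≤ A) →
      ∫ p, φ1 p * φ p ∂Pm ≤ Real.sqrt B * Real.sqrt A := by
    intro φ hφm hφ0 hφA
    have h2 : (ENNReal.ofReal (2:ℝ)) = 2 := by norm_num
    have := integral_mul_le_Lp_mul_Lq_of_nonneg (μ := Pm) hconj
      (Filter.Eventually.of_forall fun p => mul_nonneg (abs_nonneg _) (Real.sqrt_nonneg _))
      (Filter.Eventually.of_forall hφ0) (by rw [h2]; exact hφ1m) (by rw [h2]; exact hφm)
    have e1 : ∫ p, φ1 p ^ (2:ℝ) ∂Pm = B := by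
      rw [hB]
      refine integral_congr_ae (Filter.Eventually.of_forall fun p => ?_)
      show φ1 p ^ (2:ℝ) = F p
      rw [Real.rpow_two, hφ1sq p]
    have e2 : ∫ p, φ p ^ (2:ℝ) ∂Pm = ∫ p, φ p ^ 2 ∂Pm := by
      refine integral_congr_ae (Filter.Eventually.of_forall fun p => ?_)
      show φ p ^ (2:ℝ) = φ p ^ 2
      rw [Real.rpow_two]
    rw [e1, e2] at this
    calc ∫ p, φ1 p * φ p ∂Pm ≤ B ^ ((1:ℝ)/2) * (∫ p, φ p ^ 2 ∂Pm) ^ ((1:ℝ)/2) := by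
          simpa using this
      _ ≤ Real.sqrt B * Real.sqrt A := by
          rw [← Real.sqrt_eq_rpow, ← Real.sqrt_eq_rpow]
          exact mul_le_mul_of_nonneg_left (Real.sqrt_le_sqrt hφA) (Real.sqrt_nonneg _)
  have hgx_int_bound : ∫ p, gx p ∂Pm ≤ 2 * (Real.sqrt B * Real.sqrt A) + c₀ * B := by
    have hpart1 : Integrable (fun p => 2 * (φ1 p * φx p)) Pm := by
      refine Integrable.mono' (hF.add hD)
        ((continuous_const.mul (hφ1c.mul hφxc)).aestronglyMeasurable)
        (Filter.Eventually.of_forall fun p => ?_)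
      rw [Real.norm_eq_abs, abs_of_nonneg (by positivity :
        (0:ℝ) ≤ 2 * (φ1 p * φx p))]
      have e : D2 p = (px p ^ 2 + py p ^ 2) * ρ p.1 := rfl
      have e2 : F p = Ψ p ^ 2 * ρ p.1 := rfl
      have h1 : 2 * (φ1 p * φx p) ≤ φ1 p ^ 2 + φx p ^ 2 := by nlinarith [sq_nonneg (φ1 p - φx p)]
      have h2 := hφ1sq p; have h3 := hφxsq p
      show 2 * (φ1 p * φx p) ≤ F p + D2 p
      nlinarith [mul_nonneg (sq_nonneg (py p)) (hρpos p.1).le]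
    have hsplit : ∫ p, gx p ∂Pm = (∫ p, 2 * (φ1 p * φx p) ∂Pm) + c₀ * B := by
      rw [hB, ← integral_const_mul c₀ F, ← integral_add hpart1 (hF.const_mul c₀)]
      refine integral_congr_ae (Filter.Eventually.of_forall fun p => ?_)
      have e : gx p = 2 * |Ψ p| * |px p| * ρ p.1 + c₀ * F p := rfl
      have eφ1 : φ1 p = |Ψ p| * Real.sqrt (ρ p.1) := rfl
      have eφx : φx p = |px p| * Real.sqrt (ρ p.1) := rfl
      have hr : Real.sqrt (ρ p.1) * Real.sqrt (ρ p.1) = ρ p.1 :=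
        Real.mul_self_sqrt (hρpos p.1).le
      show gx p = 2 * (φ1 p * φx p) + c₀ * F p
      rw [e, eφ1, eφx]
      linear_combination (-2 * |Ψ p| * |px p|) * hr
    rw [hsplit]
    have hφxsqi : Integrable (fun p => φx p ^ 2) Pm :=
      (memLp_two_iff_integrable_sq hφxc.aestronglyMeasurable).mp hφxm
    have hφxA : ∫ p, φx p ^ 2 ∂Pm ≤ A := by
      rw [hA]
      refine integral_mono hφxsqi hD fun p => ?_
      rw [hφxsq p]
      have e : D2 p = (px p ^ 2 + py p ^ 2) * ρ p.1 := rfl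
      nlinarith [mul_nonneg (sq_nonneg (py p)) (hρpos p.1).le]
    have hcs := hCS φx hφxm (fun p => mul_nonneg (abs_nonneg _) (Real.sqrt_nonneg _)) hφxA
    rw [integral_const_mul]
    linarith
  have hgy_int_bound : ∫ p, gy p ∂Pm ≤ 2 * (Real.sqrt B * Real.sqrt A) := by
    have hsplit : ∫ p, gy p ∂Pm = 2 * ∫ p, φ1 p * φy p ∂Pm := by
      rw [← integral_const_mul]
      refine integral_congr_ae (Filter.Eventually.of_forall fun p => ?_)
      have e : gy p = 2 * |Ψ p| * |py p| * ρ p.1 := rfl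
      have eφ1 : φ1 p = |Ψ p| * Real.sqrt (ρ p.1) := rfl
      have eφy : φy p = |py p| * Real.sqrt (ρ p.1) := rfl
      have hr : Real.sqrt (ρ p.1) * Real.sqrt (ρ p.1) = ρ p.1 :=
        Real.mul_self_sqrt (hρpos p.1).le
      show gy p = 2 * (φ1 p * φy p)
      rw [e, eφ1, eφy]
      linear_combination (-2 * |Ψ p| * |py p|) * hr
    have hφysqi : Integrable (fun p => φy p ^ 2) Pm :=
      (memLp_two_iff_integrable_sq hφyc.aestronglyMeasurable).mp hφym
    have hφyA : ∫ p, φy p ^ 2 ∂Pm ≤ A := by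
      rw [hA]
      refine integral_mono hφysqi hD fun p => ?_
      rw [hφysq p]
      have e : D2 p = (px p ^ 2 + py p ^ 2) * ρ p.1 := rfl
      nlinarith [mul_nonneg (sq_nonneg (px p)) (hρpos p.1).le]
    have hcs := hCS φy hφym (fun p => mul_nonneg (abs_nonneg _) (Real.sqrt_nonneg _)) hφyA
    rw [hsplit]
    linarith
  -- final algebra
  set S : ℝ := Real.sqrt A * Real.sqrt B + B with hS
  have hS0 : 0 ≤ S := add_nonneg (mul_nonneg (Real.sqrt_nonneg _) (Real.sqrt_nonneg _)) hB0
  have hsAB : 0 ≤ Real.sqrt A * Real.sqrt B := mul_nonneg (Real.sqrt_nonneg _) (Real.sqrt_nonneg _)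
  have hw_bound : ∫ x, w x ∂μ ≤ (2 + 1 / L) * S := by
    rw [hIw, hS]
    have h1 : 1 / L * B ≤ 1 / L * S := by
      apply mul_le_mul_of_nonneg_left _ (by positivity)
      linarith
    have h2 : Real.sqrt B * Real.sqrt A ≤ S := by rw [hS]; nlinarith
    nlinarith [hgy_int_bound]
  have hu_bound : ∫ y, u y ∂ν ≤ (3 + c₀) * S := by
    rw [hIu, hS]
    have h2 : Real.sqrt B * Real.sqrt A ≤ S := by rw [hS]; nlinarith
    nlinarith [hgx_int_bound]
  have hfinal : ∫ p, F p ^ 2 ∂Pm ≤ ((2 + 1 / L) * (3 + c₀)) * S ^ 2 := by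
    have hwI0 : 0 ≤ ∫ x, w x ∂μ := integral_nonneg hw0
    have h := mul_le_mul hw_bound hu_bound (integral_nonneg hu0)
      (by positivity)
    calc ∫ p, F p ^ 2 ∂Pm ≤ (∫ x, w x ∂μ) * (∫ y, u y ∂ν) := key
      _ ≤ ((2 + 1 / L) * S) * ((3 + c₀) * S) := h
      _ = ((2 + 1 / L) * (3 + c₀)) * S ^ 2 := by ring
  -- rewrite the goal
  have eD : (fun p : ℝ × ℝ =>
      ((deriv (fun a => ψ a p.2) p.1) ^ 2 + (deriv (fun b => ψ p.1 b) p.2) ^ 2) * ρ p.1)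
      = D2 := by
    funext p; rw [hx_eq p, hy_eq p]
  have e4 : (fun p : ℝ × ℝ => (ψ p.1 p.2) ^ 4 * (ρ p.1) ^ 2) = fun p => F p ^ 2 := by
    funext p
    have e : F p = Ψ p ^ 2 * ρ p.1 := rfl
    rw [e]
    have e2 : Ψ p = ψ p.1 p.2 := rfl
    rw [e2]; ring
  calc (∫ p in (Set.univ ×ˢ Set.Ioo (0:ℝ) L : Set (ℝ × ℝ)),
          (ψ p.1 p.2) ^ 4 * (ρ p.1) ^ 2) ^ ((1:ℝ)/2)
      = (∫ p, F p ^ 2 ∂Pm) ^ ((1:ℝ)/2) := by rw [← hmeq, e4]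
    _ = Real.sqrt (∫ p, F p ^ 2 ∂Pm) := (Real.sqrt_eq_rpow _).symm
    _ ≤ Real.sqrt (((2 + 1 / L) * (3 + c₀)) * S ^ 2) := Real.sqrt_le_sqrt hfinal
    _ = Real.sqrt ((2 + 1 / L) * (3 + c₀)) * S := by
        rw [Real.sqrt_mul (by positivity), Real.sqrt_sq hS0]
    _ = Real.sqrt ((2 + 1 / L) * (3 + c₀)) *
        ((∫ p in (Set.univ ×ˢ Set.Ioo (0:ℝ) L : Set (ℝ × ℝ)),
              ((deriv (fun a => ψ a p.2) p.1) ^ 2 + (deriv (fun b => ψ p.1 b) p.2) ^ 2)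
                * ρ p.1) ^ ((1:ℝ)/2)
            * (∫ p in (Set.univ ×ˢ Set.Ioo (0:ℝ) L : Set (ℝ × ℝ)),
              (ψ p.1 p.2) ^ 2 * ρ p.1) ^ ((1:ℝ)/2)
          + ∫ p in (Set.univ ×ˢ Set.Ioo (0:ℝ) L : Set (ℝ × ℝ)),
              (ψ p.1 p.2) ^ 2 * ρ p.1) := by
        congr 1
        rw [hS, hA, hB, ← hmeq, eD]
        have eF : (fun p : ℝ × ℝ => (ψ p.1 p.2) ^ 2 * ρ p.1) = F := rfl
        rw [eF, ← Real.sqrt_eq_rpow, ← Real.sqrt_eq_rpow]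
end

section
/- Let u : Σ → ℝ with Σ = ℝ × (0,L), α > 0, and suppose (1+x₊)^α u ∈ H¹-weighted sense: ∬ (u² + |Du|²)(1+x₊)^{2α} dxdy < ∞. Then for every q ≥ 2, ∬ |u|^{2q} (1+x₊)^{2αq} dxdy ≤ C ( ∬ (u² + |Du|²)(1+x₊)^{2α} dxdy )^q, with C depending only on q and L. -/
open MeasureTheory
open scoped ENNReal NNReal


lemma cont_absd (q : ℝ) (hq : 2 ≤ q) : Continuous (fun t : ℝ => |t| ^ (q-2) * t) := by
  apply Continuous.mul _ continuous_id
  rw [continuous_iff_continuousAt]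
  intro t
  exact (Real.continuousAt_rpow_const _ _ (Or.inr (by linarith))).comp continuous_abs.continuousAt

lemma ptwise_deriv_bound (q : ℝ) (hq : 2 ≤ q) (a b : ℝ) :
    |q * |a| ^ (q-2) * a * b| ≤ q * (|a| ^ (q-1) * |b|) := by
  rcases eq_or_ne a 0 with rfl | ha
  · have h0 : q * |(0:ℝ)| ^ (q-2) * 0 * b = 0 := by ring
    rw [h0, abs_zero]
    exact mul_nonneg (by linarith) (mul_nonneg (Real.rpow_nonneg le_rfl _) (abs_nonneg _))
  · have h1 : |a| ^ (q-2) * |a| = |a| ^ (q-1) := by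
      rw [← Real.rpow_add_one (abs_ne_zero.mpr ha)]; ring_nf
    have hr : 0 ≤ |a| ^ (q-2) := Real.rpow_nonneg (abs_nonneg a) _
    rw [abs_mul, abs_mul, abs_mul, abs_of_nonneg (by linarith : (0:ℝ) ≤ q), abs_of_nonneg hr]
    calc q * |a| ^ (q-2) * |a| * |b| = q * ((|a| ^ (q-2) * |a|) * |b|) := by ring
      _ = q * (|a| ^ (q-1) * |b|) := by rw [h1]
      _ ≤ q * (|a| ^ (q-1) * |b|) := le_rfl

lemma ftc_piece {q : ℝ} (hq : 2 ≤ q) {φ dφ : ℝ → ℝ}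
    (hd : ∀ x, HasDerivAt φ (dφ x) x) (hdc : Continuous dφ) (a b : ℝ) :
    ENNReal.ofReal (|φ b| ^ q) ≤ ENNReal.ofReal (|φ a| ^ q)
      + ∫⁻ t in Set.uIoc a b, ENNReal.ofReal (q * (|φ t| ^ (q-1) * |dφ t|)) := by
  have hφc : Continuous φ := by
    rw [continuous_iff_continuousAt]; exact fun x => (hd x).continuousAt
  set dψ : ℝ → ℝ := fun s => q * |φ s| ^ (q-2) * φ s * dφ s with hdψ
  have hψd : ∀ s, HasDerivAt (fun s => |φ s| ^ q) (dψ s) s := fun s =>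
    (hasDerivAt_abs_rpow (φ s) (by linarith : 1 < q)).comp s (hd s)
  have hdψc : Continuous dψ := by
    have h1 : Continuous fun s => |φ s| ^ (q-2) * φ s := (cont_absd q hq).comp hφc
    have h2 : Continuous fun s => q * (|φ s| ^ (q-2) * φ s) * dφ s :=
      (continuous_const.mul h1).mul hdc
    have heq : dψ = fun s => q * (|φ s| ^ (q-2) * φ s) * dφ s := by
      funext s; rw [← mul_assoc]
    rw [heq]; exact h2
  have hftc : ∫ t in a..b, dψ t = |φ b| ^ q - |φ a| ^ q :=
    intervalIntegral.integral_eq_sub_of_hasDerivAt (fun x _ => hψd x)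
      (hdψc.intervalIntegrable a b)
  have h2 : |φ b| ^ q ≤ |φ a| ^ q + |∫ t in a..b, dψ t| := by
    have := abs_nonneg (∫ t in a..b, dψ t)
    have := le_abs_self (∫ t in a..b, dψ t)
    linarith [hftc]
  calc ENNReal.ofReal (|φ b| ^ q)
      ≤ ENNReal.ofReal (|φ a| ^ q + |∫ t in a..b, dψ t|) := ENNReal.ofReal_le_ofReal h2
    _ ≤ ENNReal.ofReal (|φ a| ^ q) + ENNReal.ofReal |∫ t in a..b, dψ t| :=
        ENNReal.ofReal_add_le
    _ ≤ ENNReal.ofReal (|φ a| ^ q)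
        + ∫⁻ t in Set.uIoc a b, ENNReal.ofReal (q * (|φ t| ^ (q-1) * |dφ t|)) := by
        gcongr
        have habs : |∫ t in a..b, dψ t| ≤ ∫ t in Set.uIoc a b, |dψ t| := by
          simpa [Real.norm_eq_abs] using
            intervalIntegral.norm_integral_le_integral_norm_uIoc (a := a) (b := b) (f := dψ)
        have heq : ENNReal.ofReal (∫ t in Set.uIoc a b, |dψ t|)
            = ∫⁻ t in Set.uIoc a b, ENNReal.ofReal (|dψ t|) := by
          apply ofReal_integral_eq_lintegral_ofReal
          · exact hdψc.abs.integrableOn_uIoc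
          · exact Filter.Eventually.of_forall fun t => abs_nonneg _
        calc ENNReal.ofReal |∫ t in a..b, dψ t|
            ≤ ENNReal.ofReal (∫ t in Set.uIoc a b, |dψ t|) := ENNReal.ofReal_le_ofReal habs
          _ = ∫⁻ t in Set.uIoc a b, ENNReal.ofReal (|dψ t|) := heq
          _ ≤ ∫⁻ t in Set.uIoc a b, ENNReal.ofReal (q * (|φ t| ^ (q-1) * |dφ t|)) := by
              apply lintegral_mono fun t => ENNReal.ofReal_le_ofReal ?_
              exact ptwise_deriv_bound q hq (φ t) (dφ t)

lemma slice_bound {q : ℝ} (hq : 2 ≤ q) {φ dφ : ℝ → ℝ}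
    (hd : ∀ x, HasDerivAt φ (dφ x) x) (hdc : Continuous dφ)
    (hfin : ∫⁻ x, ENNReal.ofReal (|φ x| ^ q) ≠ ⊤) (x : ℝ) :
    ENNReal.ofReal (|φ x| ^ q) ≤ ∫⁻ s, ENNReal.ofReal (q * (|φ s| ^ (q-1) * |dφ s|)) := by
  refine ENNReal.le_of_forall_pos_le_add fun ε hε _ => ?_
  have hex : ∃ x', |φ x'| ^ q ≤ (ε:ℝ) := by
    by_contra h
    push_neg at h
    apply hfin
    refine le_antisymm le_top ?_
    calc (⊤:ℝ≥0∞) = ∫⁻ (_ : ℝ), (ε:ℝ≥0∞) := by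
          rw [lintegral_const, Real.volume_univ,
            ENNReal.mul_top (show ((ε:ℝ≥0∞)) ≠ 0 by exact_mod_cast hε.ne')]
      _ ≤ ∫⁻ x, ENNReal.ofReal (|φ x| ^ q) := by
          apply lintegral_mono fun s => ?_
          rw [← ENNReal.ofReal_coe_nnreal]
          exact ENNReal.ofReal_le_ofReal (h s).le
  obtain ⟨x', hx'⟩ := hex
  calc ENNReal.ofReal (|φ x| ^ q)
      ≤ ENNReal.ofReal (|φ x'| ^ q)
        + ∫⁻ t in Set.uIoc x' x, ENNReal.ofReal (q * (|φ t| ^ (q-1) * |dφ t|)) :=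
        ftc_piece hq hd hdc x' x
    _ ≤ (ε:ℝ≥0∞) + (∫⁻ s, ENNReal.ofReal (q * (|φ s| ^ (q-1) * |dφ s|))) := by
        gcongr
        · rw [← ENNReal.ofReal_coe_nnreal]; exact ENNReal.ofReal_le_ofReal hx'
        · exact Measure.restrict_le_self
    _ = (∫⁻ s, ENNReal.ofReal (q * (|φ s| ^ (q-1) * |dφ s|))) + (ε:ℝ≥0∞) := add_comm _ _


noncomputable def wb (x : ℝ) : ℝ := 1 + Real.log (1 + Real.exp x)
noncomputable def what (α x : ℝ) : ℝ := Real.exp (α * Real.log (wb x))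
noncomputable def whatd (α x : ℝ) : ℝ :=
  what α x * (α * (Real.exp x / (1 + Real.exp x)) / wb x)

lemma one_le_wb (x : ℝ) : 1 ≤ wb x := by
  have : (0:ℝ) ≤ Real.log (1 + Real.exp x) :=
    Real.log_nonneg (by nlinarith [Real.exp_pos x])
  unfold wb; linarith

lemma wb_pos (x : ℝ) : 0 < wb x := lt_of_lt_of_le one_pos (one_le_wb x)

lemma what_eq (α x : ℝ) : what α x = wb x ^ α := by
  rw [what, Real.rpow_def_of_pos (wb_pos x), mul_comm]

lemma what_pos (α x : ℝ) : 0 < what α x := Real.exp_pos _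

lemma le_wb (x : ℝ) : 1 + max x 0 ≤ wb x := by
  rcases le_total x 0 with h | h
  · simp [max_eq_right h, one_le_wb x]
  · rw [max_eq_left h]
    have : x = Real.log (Real.exp x) := (Real.log_exp x).symm
    have h2 : Real.log (Real.exp x) ≤ Real.log (1 + Real.exp x) :=
      Real.log_le_log (Real.exp_pos x) (by linarith)
    unfold wb; linarith
lemma wb_le (x : ℝ) : wb x ≤ 2 * (1 + max x 0) := by
  have hl2 : Real.log 2 ≤ 1 := by
    rw [← Real.log_exp 1]
    exact Real.log_le_log two_pos (by nlinarith [Real.add_one_le_exp (1:ℝ)])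
  rcases le_total x 0 with h | h
  · rw [max_eq_right h]
    have : Real.exp x ≤ 1 := Real.exp_le_one_iff.mpr h
    have h2 : Real.log (1 + Real.exp x) ≤ Real.log 2 :=
      Real.log_le_log (by positivity) (by linarith)
    unfold wb; linarith
  · rw [max_eq_left h]
    have he : (1:ℝ) ≤ Real.exp x := Real.one_le_exp h
    have h2 : Real.log (1 + Real.exp x) ≤ Real.log (2 * Real.exp x) :=
      Real.log_le_log (by positivity) (by linarith)
    rw [Real.log_mul two_ne_zero (Real.exp_ne_zero x), Real.log_exp] at h2
    unfold wb; linarith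

lemma weight_le_what {α : ℝ} (hα : 0 ≤ α) (x : ℝ) : (1 + max x 0) ^ α ≤ what α x := by
  rw [what_eq]
  exact Real.rpow_le_rpow (by positivity) (le_wb x) hα

lemma what_le_weight {α : ℝ} (hα : 0 ≤ α) (x : ℝ) :
    what α x ≤ 2 ^ α * (1 + max x 0) ^ α := by
  rw [what_eq, ← Real.mul_rpow two_pos.le (by positivity)]
  exact Real.rpow_le_rpow (wb_pos x).le (wb_le x) hα

lemma hasDerivAt_wb (x : ℝ) :
    HasDerivAt wb (Real.exp x / (1 + Real.exp x)) x := by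
  have h1 : HasDerivAt (fun x : ℝ => 1 + Real.exp x) (Real.exp x) x := by
    simpa using (Real.hasDerivAt_exp x).const_add 1
  have h2 := (h1.log (by positivity)).const_add 1
  exact h2

lemma hasDerivAt_what (α x : ℝ) : HasDerivAt (what α) (whatd α x) x := by
  have h1 := ((hasDerivAt_wb x).log (wb_pos x).ne').const_mul α
  have h2 := h1.exp
  rw [show what α = fun x => Real.exp (α * Real.log (wb x)) from rfl]
  simpa [what, whatd, mul_comm, mul_div_assoc] using h2

lemma whatd_nonneg {α : ℝ} (hα : 0 ≤ α) (x : ℝ) : 0 ≤ whatd α x := by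
  have := (what_pos α x).le
  have := (wb_pos x).le
  have := (Real.exp_pos x).le
  unfold whatd
  positivity

lemma whatd_le {α : ℝ} (hα : 0 ≤ α) (x : ℝ) : whatd α x ≤ α * what α x := by
  have h1 : Real.exp x / (1 + Real.exp x) ≤ 1 := by
    rw [div_le_one (by positivity)]; linarith
  have h2 : α * (Real.exp x / (1 + Real.exp x)) / wb x ≤ α := by
    have hd : α * (Real.exp x / (1 + Real.exp x)) ≤ α * 1 :=
      mul_le_mul_of_nonneg_left h1 hα
    calc α * (Real.exp x / (1 + Real.exp x)) / wb x
        ≤ α * (Real.exp x / (1 + Real.exp x)) := by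
          apply div_le_self (by positivity) (one_le_wb x)
      _ ≤ α := by linarith
  calc whatd α x ≤ what α x * α := by
        unfold whatd
        exact mul_le_mul_of_nonneg_left h2 (what_pos α x).le
    _ = α * what α x := mul_comm _ _

lemma contDiff_what (α : ℝ) : ContDiff ℝ 1 (what α) := by
  rw [contDiff_iff_contDiffAt]
  intro x
  have h1 : ContDiffAt ℝ 1 (fun x : ℝ => 1 + Real.exp x) x :=
    (contDiff_const.add Real.contDiff_exp).contDiffAt
  have h2 : ContDiffAt ℝ 1 wb x := by
    have := (contDiffAt_const (c := (1:ℝ))).add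
      ((Real.contDiffAt_log.mpr (show (1:ℝ) + Real.exp x ≠ 0 by positivity)).comp x h1)
    exact this.congr_of_eventuallyEq (by filter_upwards with y; rfl)
  have h3 : ContDiffAt ℝ 1 (fun x => α * Real.log (wb x)) x :=
    (contDiffAt_const (c := α)).mul ((Real.contDiffAt_log.mpr (wb_pos x).ne').comp x h2)
  exact (Real.contDiff_exp.contDiffAt).comp x h3


lemma tonelli_yx (L : ℝ) (f : ℝ × ℝ → ℝ≥0∞) (hf : Measurable f) :
    ∫⁻ p in (Set.univ ×ˢ Set.Ioo (0:ℝ) L), f p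
      = ∫⁻ y in Set.Ioo (0:ℝ) L, ∫⁻ x, f (x, y) := by
  have h1 : (volume : Measure (ℝ×ℝ)).restrict (Set.univ ×ˢ Set.Ioo (0:ℝ) L)
      = ((volume : Measure ℝ).restrict Set.univ).prod
        ((volume : Measure ℝ).restrict (Set.Ioo (0:ℝ) L)) := by
    rw [Measure.volume_eq_prod, Measure.prod_restrict]
  rw [h1, Measure.restrict_univ, lintegral_prod_symm _ hf.aemeasurable]

lemma tonelli_xy (L : ℝ) (f : ℝ × ℝ → ℝ≥0∞) (hf : Measurable f) :
    ∫⁻ p in (Set.univ ×ˢ Set.Ioo (0:ℝ) L), f p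
      = ∫⁻ x, ∫⁻ y in Set.Ioo (0:ℝ) L, f (x, y) := by
  have h1 : (volume : Measure (ℝ×ℝ)).restrict (Set.univ ×ˢ Set.Ioo (0:ℝ) L)
      = ((volume : Measure ℝ).restrict Set.univ).prod
        ((volume : Measure ℝ).restrict (Set.Ioo (0:ℝ) L)) := by
    rw [Measure.volume_eq_prod, Measure.prod_restrict]
  rw [h1, Measure.restrict_univ, lintegral_prod _ hf.aemeasurable]

lemma lintegral_interp {X : Type*} [MeasurableSpace X] {μ : Measure X} (f g : X → ℝ≥0∞)
    (hf : Measurable f) (hg : Measurable g) {t : ℝ} (ht : 0 < t) (ht1 : t ≤ 1) :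
    ∫⁻ x, f x ^ t * g x ^ (1-t) ∂μ ≤ (∫⁻ x, f x ∂μ) ^ t * (∫⁻ x, g x ∂μ) ^ (1-t) := by
  rcases eq_or_lt_of_le ht1 with rfl | ht1
  · simp
  · have hconj : Real.HolderConjugate (1/t) (1/(1-t)) := by
      rw [Real.holderConjugate_iff]; constructor
      · rw [lt_div_iff₀ ht]; linarith
      · rw [one_div, inv_inv, one_div, inv_inv]; ring
    have hfm : Measurable fun x => f x ^ t := hf.pow_const t
    have hgm : Measurable fun x => g x ^ (1-t) := hg.pow_const (1-t)
    have h := ENNReal.lintegral_mul_le_Lp_mul_Lq μ hconj hfm.aemeasurable hgm.aemeasurable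
    simp only [Pi.mul_apply] at h
    refine le_trans h (le_of_eq ?_)
    have e1 : ∀ x, (f x ^ t) ^ (1/t) = f x := fun x => by
      rw [← ENNReal.rpow_mul, mul_one_div_cancel ht.ne', ENNReal.rpow_one]
    have e2 : ∀ x, (g x ^ (1-t)) ^ (1/(1-t)) = g x := fun x => by
      rw [← ENNReal.rpow_mul, mul_one_div_cancel (by linarith : 1 - t ≠ 0), ENNReal.rpow_one]
    simp only [e1, e2, one_div_one_div]

lemma real_absorb (L q p e m n : ℝ) (hL : 0 < L) (hq : 2 ≤ q) (hp : 0 ≤ p) (he : 0 ≤ e)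
    (hm : 0 ≤ m) (hn : 0 ≤ n)
    (h1 : p ≤ q * (m ^ ((1:ℝ)/2) * e ^ ((1:ℝ)/2))
        * (2*n/L + q * (m ^ ((1:ℝ)/2) * e ^ ((1:ℝ)/2))))
    (hm2 : m ≤ e ^ (1/(q-1)) * p ^ (1-1/(q-1)))
    (hn2 : n ≤ e ^ (q/(2*q-2)) * p ^ (1-q/(2*q-2))) :
    p ≤ (2*q/L + q^2) ^ (q-1) * e ^ q := by
  have hq1 : (0:ℝ) < q - 1 := by linarith
  have hcb : (0:ℝ) ≤ 2*q/L + q^2 := by positivity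
  rcases eq_or_lt_of_le hp with rfl | hp0
  · positivity
  rcases eq_or_lt_of_le he with rfl | he0
  · -- e = 0 forces m = 0 then p ≤ 0, contradiction
    exfalso
    have hθ : (0:ℝ) < 1/(q-1) := by positivity
    rw [Real.zero_rpow hθ.ne', zero_mul] at hm2
    have hm0 : m = 0 := le_antisymm hm2 hm
    rw [hm0, Real.zero_rpow (by norm_num : ((1:ℝ)/2) ≠ 0), zero_mul, mul_zero, zero_mul] at h1
    linarith
  set θ := 1/(q-1) with hθdef
  set σ := q/(2*q-2) with hσdef
  have hθpos : 0 < θ := by positivity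
  have hθle : θ ≤ 1 := by rw [hθdef, div_le_one hq1]; linarith
  have hσpos : 0 < σ := by apply div_pos (by linarith); linarith
  -- key : m^(1/2) * e^(1/2) ≤ e^((1+θ)/2) * p^((1-θ)/2)
  have hkey : m ^ ((1:ℝ)/2) * e ^ ((1:ℝ)/2) ≤ e ^ ((1+θ)/2) * p ^ ((1-θ)/2) := by
    have h2 : m ^ ((1:ℝ)/2) ≤ (e ^ θ * p ^ (1-θ)) ^ ((1:ℝ)/2) :=
      Real.rpow_le_rpow hm hm2 (by norm_num)
    have h3 : (e ^ θ * p ^ (1-θ)) ^ ((1:ℝ)/2) = e ^ (θ/2) * p ^ ((1-θ)/2) := by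
      rw [Real.mul_rpow (by positivity) (by positivity), ← Real.rpow_mul he,
        ← Real.rpow_mul hp, show θ * ((1:ℝ)/2) = θ/2 by ring,
        show (1-θ) * ((1:ℝ)/2) = (1-θ)/2 by ring]
    have h4 : e ^ (θ/2) * e ^ ((1:ℝ)/2) = e ^ ((1+θ)/2) := by
      rw [← Real.rpow_add he0, show θ/2 + (1:ℝ)/2 = (1+θ)/2 by ring]
    calc m ^ ((1:ℝ)/2) * e ^ ((1:ℝ)/2) ≤ (e ^ (θ/2) * p ^ ((1-θ)/2)) * e ^ ((1:ℝ)/2) := by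
          apply mul_le_mul_of_nonneg_right _ (Real.rpow_nonneg he _)
          rw [← h3]; exact h2
      _ = e ^ ((1+θ)/2) * p ^ ((1-θ)/2) := by rw [← h4]; ring
  set a := (q-2)/(q-1) with hadef
  set b := q/(q-1) with hbdef
  have h2q2 : (2*q-2) ≠ 0 := by intro h; linarith
  have hea : (1:ℝ) + θ = b := by rw [hθdef, hbdef]; field_simp; ring
  have heb : (1:ℝ) - θ = a := by rw [hθdef, hadef]; first
      | (field_simp [hq1.ne', h2q2]; ring)
      | field_simp [hq1.ne', h2q2]
  have hec : (1+θ)/2 + σ = b := by rw [hθdef, hσdef, hbdef]; first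
      | (field_simp [hq1.ne', h2q2]; ring)
      | field_simp [hq1.ne', h2q2]
  have hed : (1-θ)/2 + (1 - σ) = a := by rw [hθdef, hσdef, hadef]; first
      | (field_simp [hq1.ne', h2q2]; ring)
      | field_simp [hq1.ne', h2q2]
  have hX : 0 ≤ e ^ ((1+θ)/2) * p ^ ((1-θ)/2) := by positivity
  have hA : 0 ≤ m ^ ((1:ℝ)/2) * e ^ ((1:ℝ)/2) := by positivity
  have hmain : p ≤ (2*q/L + q^2) * (e ^ b * p ^ a) := by
    have hterm : q * (m ^ ((1:ℝ)/2) * e ^ ((1:ℝ)/2))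
        * (2*n/L + q * (m ^ ((1:ℝ)/2) * e ^ ((1:ℝ)/2)))
        ≤ q * (e ^ ((1+θ)/2) * p ^ ((1-θ)/2))
          * (2*(e ^ σ * p ^ (1-σ))/L + q * (e ^ ((1+θ)/2) * p ^ ((1-θ)/2))) := by
      apply mul_le_mul
      · exact mul_le_mul_of_nonneg_left hkey (by linarith)
      · apply add_le_add
        · gcongr 2 * ?_ / L
          all_goals exact hn2
        · exact mul_le_mul_of_nonneg_left hkey (by linarith)
      · have : 0 ≤ 2*n/L := by positivity
        have h5 : 0 ≤ q * (m ^ ((1:ℝ)/2) * e ^ ((1:ℝ)/2)) :=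
          mul_nonneg (by linarith) hA
        positivity
      · positivity
    have hexp1 : e ^ ((1+θ)/2) * p ^ ((1-θ)/2) * (e ^ σ * p ^ (1-σ)) = e ^ b * p ^ a := by
      rw [show e ^ ((1+θ)/2) * p ^ ((1-θ)/2) * (e ^ σ * p ^ (1-σ))
          = (e ^ ((1+θ)/2) * e ^ σ) * (p ^ ((1-θ)/2) * p ^ (1-σ)) by ring,
        ← Real.rpow_add he0, ← Real.rpow_add hp0, hec, hed]
    have hexp2 : (e ^ ((1+θ)/2) * p ^ ((1-θ)/2)) * (e ^ ((1+θ)/2) * p ^ ((1-θ)/2))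
        = e ^ b * p ^ a := by
      rw [show (e ^ ((1+θ)/2) * p ^ ((1-θ)/2)) * (e ^ ((1+θ)/2) * p ^ ((1-θ)/2))
          = (e ^ ((1+θ)/2) * e ^ ((1+θ)/2)) * (p ^ ((1-θ)/2) * p ^ ((1-θ)/2)) by ring,
        ← Real.rpow_add he0, ← Real.rpow_add hp0,
        show (1+θ)/2 + (1+θ)/2 = 1 + θ by ring,
        show (1-θ)/2 + (1-θ)/2 = 1 - θ by ring, hea, heb]
    calc p ≤ q * (m ^ ((1:ℝ)/2) * e ^ ((1:ℝ)/2))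
          * (2*n/L + q * (m ^ ((1:ℝ)/2) * e ^ ((1:ℝ)/2))) := h1
      _ ≤ q * (e ^ ((1+θ)/2) * p ^ ((1-θ)/2))
          * (2*(e ^ σ * p ^ (1-σ))/L + q * (e ^ ((1+θ)/2) * p ^ ((1-θ)/2))) := hterm
      _ = (2*q/L) * (e ^ ((1+θ)/2) * p ^ ((1-θ)/2) * (e ^ σ * p ^ (1-σ)))
          + q^2 * ((e ^ ((1+θ)/2) * p ^ ((1-θ)/2)) * (e ^ ((1+θ)/2) * p ^ ((1-θ)/2))) := by
          ring
      _ = (2*q/L) * (e ^ b * p ^ a) + q^2 * (e ^ b * p ^ a) := by rw [hexp1, hexp2]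
      _ = (2*q/L + q^2) * (e ^ b * p ^ a) := by ring
  have hpa : 0 < p ^ a := Real.rpow_pos_of_pos hp0 a
  have hdiv : p ^ (1-a) ≤ (2*q/L + q^2) * e ^ b := by
    rw [show p ^ (1-a) = p ^ (1:ℝ) / p ^ a from Real.rpow_sub hp0 1 a, Real.rpow_one,
      div_le_iff₀ hpa]
    calc p ≤ (2*q/L + q^2) * (e ^ b * p ^ a) := hmain
      _ = (2*q/L + q^2) * e ^ b * p ^ a := by ring
  have h1a : (1-a)*(q-1) = 1 := by rw [hadef]; first
      | (field_simp [hq1.ne', h2q2]; ring)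
      | field_simp [hq1.ne', h2q2]
  calc p = (p ^ (1-a)) ^ (q-1) := by
        rw [← Real.rpow_mul hp, h1a, Real.rpow_one]
    _ ≤ ((2*q/L + q^2) * e ^ b) ^ (q-1) :=
        Real.rpow_le_rpow (Real.rpow_nonneg hp _) hdiv (by linarith)
    _ = (2*q/L + q^2) ^ (q-1) * (e ^ b) ^ (q-1) :=
        Real.mul_rpow hcb (Real.rpow_nonneg he _)
    _ = (2*q/L + q^2) ^ (q-1) * e ^ q := by
        rw [← Real.rpow_mul he, show b * (q-1) = q by rw [hbdef]; first
      | (field_simp [hq1.ne', h2q2]; ring)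
      | field_simp [hq1.ne', h2q2]]


-- assume lintegral_interp from g.lean
lemma interp_core {X : Type*} [MeasurableSpace X] {μ : Measure X} {f : X → ℝ}
    (hf : Measurable f) {q r : ℝ} (hq : 2 ≤ q) (hr2 : 2 ≤ r) (hrq : r < 2*q) :
    ∫⁻ x, ENNReal.ofReal (|f x| ^ r) ∂μ
      ≤ (∫⁻ x, ENNReal.ofReal ((f x)^2) ∂μ) ^ ((2*q-r)/(2*q-2))
        * (∫⁻ x, ENNReal.ofReal (|f x| ^ (2*q)) ∂μ) ^ (1-(2*q-r)/(2*q-2)) := by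
  have hq2 : (0:ℝ) < 2*q-2 := by linarith
  set κ := (2*q-r)/(2*q-2) with hκdef
  have hκpos : 0 < κ := div_pos (by linarith) hq2
  have hκ1 : κ ≤ 1 := by rw [hκdef, div_le_one hq2]; linarith
  have hpt : ∀ x, ENNReal.ofReal (|f x| ^ r)
      = ENNReal.ofReal ((f x)^2) ^ κ * ENNReal.ofReal (|f x| ^ (2*q)) ^ (1-κ) := by
    intro x
    have h2 : ENNReal.ofReal ((f x)^2) = ENNReal.ofReal (|f x|) ^ (2:ℝ) := by
      rw [ENNReal.ofReal_rpow_of_nonneg (abs_nonneg _) (by norm_num)]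
      congr 1
      rw [show (2:ℝ) = ((2:ℕ):ℝ) by norm_num, Real.rpow_natCast, sq_abs]
    have h3 : ENNReal.ofReal (|f x| ^ (2*q)) = ENNReal.ofReal (|f x|) ^ (2*q) := by
      rw [ENNReal.ofReal_rpow_of_nonneg (abs_nonneg _) (by linarith)]
    have h4 : ENNReal.ofReal (|f x| ^ r) = ENNReal.ofReal (|f x|) ^ r := by
      rw [ENNReal.ofReal_rpow_of_nonneg (abs_nonneg _) (by linarith)]
    rw [h2, h3, h4, ← ENNReal.rpow_mul, ← ENNReal.rpow_mul,
      ← ENNReal.rpow_add_of_nonneg _ _ (by positivity) (by nlinarith [mul_nonneg (le_of_lt (by linarith : (0:ℝ) < 2*q)) (sub_nonneg.mpr hκ1)])]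
    congr 1
    have hmul : κ * (2*q-2) = 2*q-r := by rw [hκdef]; exact div_mul_cancel₀ _ hq2.ne'
    linear_combination hmul
  calc ∫⁻ x, ENNReal.ofReal (|f x| ^ r) ∂μ
      = ∫⁻ x, ENNReal.ofReal ((f x)^2) ^ κ * ENNReal.ofReal (|f x| ^ (2*q)) ^ (1-κ) ∂μ :=
        lintegral_congr hpt
    _ ≤ _ := lintegral_interp _ _ ((hf.pow_const 2).ennreal_ofReal)
        ((hf.abs.pow measurable_const).ennreal_ofReal) hκpos hκ1

lemma cont_abs_rpow {X : Type*} [TopologicalSpace X] {f : X → ℝ} (hf : Continuous f)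
    {r : ℝ} (hr : 0 ≤ r) : Continuous fun p => |f p| ^ r := by
  rw [continuous_iff_continuousAt]; intro x
  exact (Real.continuousAt_rpow_const _ _ (Or.inr hr)).comp (continuous_abs.comp hf).continuousAt

lemma core (L q : ℝ) (hL : 0 < L) (hq : 2 ≤ q) (v : ℝ × ℝ → ℝ) (hv : ContDiff ℝ 1 v)
    (hE : (∫⁻ p in (Set.univ ×ˢ Set.Ioo (0:ℝ) L : Set (ℝ × ℝ)),
        ENNReal.ofReal ((v p)^2 + (fderiv ℝ v p (1,0))^2 + (fderiv ℝ v p (0,1))^2)) ≠ ⊤)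
    (hP : (∫⁻ p in (Set.univ ×ˢ Set.Ioo (0:ℝ) L : Set (ℝ × ℝ)),
        ENNReal.ofReal (|v p| ^ (2*q))) ≠ ⊤) :
    (∫⁻ p in (Set.univ ×ˢ Set.Ioo (0:ℝ) L : Set (ℝ × ℝ)), ENNReal.ofReal (|v p| ^ (2*q)))
      ≤ ENNReal.ofReal ((2*q/L + q^2) ^ (q-1))
        * (∫⁻ p in (Set.univ ×ˢ Set.Ioo (0:ℝ) L : Set (ℝ × ℝ)),
            ENNReal.ofReal ((v p)^2 + (fderiv ℝ v p (1,0))^2 + (fderiv ℝ v p (0,1))^2)) ^ q := by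
  have hq0 : (0:ℝ) < q := by linarith
  have hq1 : (0:ℝ) < q - 1 := by linarith
  set Ω : Set (ℝ × ℝ) := Set.univ ×ˢ Set.Ioo (0:ℝ) L with hΩdef
  set vx : ℝ × ℝ → ℝ := fun p => fderiv ℝ v p (1,0) with hvxdef
  set vy : ℝ × ℝ → ℝ := fun p => fderiv ℝ v p (0,1) with hvydef
  have hvc : Continuous v := hv.continuous
  have hvxc : Continuous vx := (hv.continuous_fderiv one_ne_zero).clm_apply continuous_const
  have hvyc : Continuous vy := (hv.continuous_fderiv one_ne_zero).clm_apply continuous_const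
  -- slice derivatives
  have hslx : ∀ y x, HasDerivAt (fun a => v (a, y)) (vx (x, y)) x := by
    intro y x
    have h1 : HasDerivAt (fun a : ℝ => (a, y)) ((1:ℝ), (0:ℝ)) x :=
      (hasDerivAt_id x).prodMk (hasDerivAt_const x y)
    have h2 := ((hv.differentiable one_ne_zero) (x, y)).hasFDerivAt.comp_hasDerivAt x h1
    simpa [Function.comp_def] using h2
  have hsly : ∀ x y, HasDerivAt (fun b => v (x, b)) (vy (x, y)) y := by
    intro x y
    have h1 : HasDerivAt (fun b : ℝ => (x, b)) ((0:ℝ), (1:ℝ)) y :=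
      (hasDerivAt_const y x).prodMk (hasDerivAt_id y)
    have h2 := ((hv.differentiable one_ne_zero) (x, y)).hasFDerivAt.comp_hasDerivAt y h1
    simpa [Function.comp_def] using h2
  -- names for integrals
  set eF : ℝ × ℝ → ℝ := fun p => (v p)^2 + (vx p)^2 + (vy p)^2 with heFdef
  have heFc : Continuous eF := ((hvc.pow 2).add (hvxc.pow 2)).add (hvyc.pow 2)
  set E := ∫⁻ p in Ω, ENNReal.ofReal (eF p) with hEdef
  set P := ∫⁻ p in Ω, ENNReal.ofReal (|v p| ^ (2*q)) with hPdef
  set M := ∫⁻ p in Ω, ENNReal.ofReal (|v p| ^ (2*q-2)) with hMdef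
  set N := ∫⁻ p in Ω, ENNReal.ofReal (|v p| ^ q) with hNdef
  set ax : ℝ × ℝ → ℝ := fun p => q * (|v p| ^ (q-1) * |vx p|) with haxdef
  set ay : ℝ × ℝ → ℝ := fun p => q * (|v p| ^ (q-1) * |vy p|) with haydef
  have haxc : Continuous ax :=
    continuous_const.mul ((cont_abs_rpow hvc (by linarith)).mul hvxc.abs)
  have hayc : Continuous ay :=
    continuous_const.mul ((cont_abs_rpow hvc (by linarith)).mul hvyc.abs)
  set Ix := ∫⁻ p in Ω, ENNReal.ofReal (ax p) with hIxdef
  set Iy := ∫⁻ p in Ω, ENNReal.ofReal (ay p) with hIydef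
  -- measurability of integrands
  have measq : Measurable fun p : ℝ × ℝ => ENNReal.ofReal (|v p| ^ q) :=
    ((cont_abs_rpow hvc hq0.le)).measurable.ennreal_ofReal
  have meas2q : Measurable fun p : ℝ × ℝ => ENNReal.ofReal (|v p| ^ (2*q)) :=
    ((cont_abs_rpow hvc (by linarith : (0:ℝ) ≤ 2*q))).measurable.ennreal_ofReal
  have measax : Measurable fun p : ℝ × ℝ => ENNReal.ofReal (ax p) :=
    haxc.measurable.ennreal_ofReal
  have measay : Measurable fun p : ℝ × ℝ => ENNReal.ofReal (ay p) :=
    hayc.measurable.ennreal_ofReal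
  -- interp bounds
  have hv2le : (∫⁻ p in Ω, ENNReal.ofReal ((v p)^2)) ≤ E := by
    apply lintegral_mono fun p => ENNReal.ofReal_le_ofReal ?_
    simp only [heFdef]; nlinarith [sq_nonneg (vx p), sq_nonneg (vy p)]
  have hMle : M ≤ E ^ (1/(q-1)) * P ^ (1-1/(q-1)) := by
    have h := interp_core (μ := volume.restrict Ω) hvc.measurable hq
      (r := 2*q-2) (by linarith) (by linarith)
    have h2q2 : (2*q-2) ≠ 0 := by intro hh; linarith
    rw [show (2*q-(2*q-2))/(2*q-2) = 1/(q-1) by field_simp [h2q2, hq1.ne']; ring] at h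
    refine h.trans ?_
    exact mul_le_mul_left (ENNReal.rpow_le_rpow hv2le (div_nonneg (by linarith) (by linarith))) _
  have hNle : N ≤ E ^ (q/(2*q-2)) * P ^ (1-q/(2*q-2)) := by
    have h := interp_core (μ := volume.restrict Ω) hvc.measurable hq
      (r := q) (by linarith) (by linarith)
    rw [show (2*q-q)/(2*q-2) = q/(2*q-2) by ring_nf] at h
    refine h.trans ?_
    exact mul_le_mul_left (ENNReal.rpow_le_rpow hv2le (div_nonneg (by linarith) (by linarith))) _
  -- finiteness
  have hMfin : M ≠ ⊤ := by
    refine ne_top_of_le_ne_top ?_ hMle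
    exact ENNReal.mul_ne_top (ENNReal.rpow_ne_top_of_nonneg (div_nonneg (by linarith) (by linarith)) hE)
      (ENNReal.rpow_ne_top_of_nonneg (by rw [sub_nonneg, div_le_one hq1]; linarith) hP)
  have hNfin : N ≠ ⊤ := by
    refine ne_top_of_le_ne_top ?_ hNle
    exact ENNReal.mul_ne_top (ENNReal.rpow_ne_top_of_nonneg (div_nonneg (by linarith) (by linarith)) hE)
      (ENNReal.rpow_ne_top_of_nonneg
        (by rw [sub_nonneg, div_le_one (by linarith : (0:ℝ) < 2*q-2)]; linarith) hP)
  -- B slice function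
  set 𝔅 : ℝ → ℝ≥0∞ := fun y => ∫⁻ x, ENNReal.ofReal (|v (x, y)| ^ q) with h𝔅def
  have h𝔅meas : Measurable 𝔅 := by
    apply Measurable.lintegral_prod_left (f := fun x y => ENNReal.ofReal (|v (x, y)| ^ q))
    exact measq
  have hNrw : N = ∫⁻ y in Set.Ioo (0:ℝ) L, 𝔅 y := tonelli_yx L _ measq
  -- Tonelli for ay the other way
  have hIyrw : Iy = ∫⁻ x, ∫⁻ t in Set.Ioo (0:ℝ) L, ENNReal.ofReal (ay (x, t)) :=
    tonelli_xy L _ measay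
  -- Hölder step
  have holder : ∀ g : ℝ × ℝ → ℝ, Continuous g →
      (∫⁻ p in Ω, ENNReal.ofReal (q * (|v p| ^ (q-1) * |g p|)))
        ≤ ENNReal.ofReal q * (M ^ ((1:ℝ)/2)
            * (∫⁻ p in Ω, ENNReal.ofReal ((g p)^2)) ^ ((1:ℝ)/2)) := by
    intro g hg
    have hconj : Real.HolderConjugate 2 2 := Real.HolderConjugate.two_two
    have hf1 : Measurable fun p : ℝ × ℝ => ENNReal.ofReal (|v p| ^ (q-1)) :=
      (cont_abs_rpow hvc (by linarith)).measurable.ennreal_ofReal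
    have hf2 : Measurable fun p : ℝ × ℝ => ENNReal.ofReal |g p| :=
      hg.abs.measurable.ennreal_ofReal
    have hsplit : ∀ p : ℝ × ℝ, ENNReal.ofReal (q * (|v p| ^ (q-1) * |g p|))
        = ENNReal.ofReal q * (ENNReal.ofReal (|v p| ^ (q-1)) * ENNReal.ofReal |g p|) := by
      intro p
      rw [ENNReal.ofReal_mul hq0.le, ENNReal.ofReal_mul (by positivity)]
    have h1 : (∫⁻ p in Ω, ENNReal.ofReal (q * (|v p| ^ (q-1) * |g p|)))
        = ENNReal.ofReal q
          * ∫⁻ p in Ω, ENNReal.ofReal (|v p| ^ (q-1)) * ENNReal.ofReal |g p| := by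
      rw [← lintegral_const_mul _ (show Measurable fun p : ℝ × ℝ => ENNReal.ofReal (|v p| ^ (q-1)) * ENNReal.ofReal |g p| from hf1.mul hf2)]
      exact lintegral_congr hsplit
    have h2 := ENNReal.lintegral_mul_le_Lp_mul_Lq (volume.restrict Ω) hconj
      hf1.aemeasurable hf2.aemeasurable
    simp only [Pi.mul_apply] at h2
    have e1 : ∀ p : ℝ × ℝ, ENNReal.ofReal (|v p| ^ (q-1)) ^ (2:ℝ)
        = ENNReal.ofReal (|v p| ^ (2*q-2)) := by
      intro p
      rw [ENNReal.ofReal_rpow_of_nonneg (by positivity) (by norm_num)]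
      congr 1
      rw [← Real.rpow_mul (abs_nonneg _), show (q-1)*(2:ℝ) = 2*q-2 by ring]
    have e2 : ∀ p : ℝ × ℝ, ENNReal.ofReal |g p| ^ (2:ℝ) = ENNReal.ofReal ((g p)^2) := by
      intro p
      rw [ENNReal.ofReal_rpow_of_nonneg (abs_nonneg _) (by norm_num)]
      congr 1
      rw [show ((2:ℝ)) = ((2:ℕ):ℝ) by norm_num, Real.rpow_natCast, sq_abs]
    rw [h1]
    apply mul_le_mul_right
    refine h2.trans (le_of_eq ?_)
    congr 1
    · congr 1
      exact lintegral_congr e1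
    · congr 1
      exact lintegral_congr e2
  have hvx2le : (∫⁻ p in Ω, ENNReal.ofReal ((vx p)^2)) ≤ E := by
    apply lintegral_mono fun p => ENNReal.ofReal_le_ofReal ?_
    simp only [heFdef]; nlinarith [sq_nonneg (v p), sq_nonneg (vy p)]
  have hvy2le : (∫⁻ p in Ω, ENNReal.ofReal ((vy p)^2)) ≤ E := by
    apply lintegral_mono fun p => ENNReal.ofReal_le_ofReal ?_
    simp only [heFdef]; nlinarith [sq_nonneg (v p), sq_nonneg (vx p)]
  have hIxle : Ix ≤ ENNReal.ofReal q * (M ^ ((1:ℝ)/2) * E ^ ((1:ℝ)/2)) := by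
    refine (holder vx hvxc).trans ?_
    exact mul_le_mul_right (mul_le_mul_right
      (ENNReal.rpow_le_rpow hvx2le (by norm_num)) _) _
  have hIyle : Iy ≤ ENNReal.ofReal q * (M ^ ((1:ℝ)/2) * E ^ ((1:ℝ)/2)) := by
    refine (holder vy hvyc).trans ?_
    exact mul_le_mul_right (mul_le_mul_right
      (ENNReal.rpow_le_rpow hvy2le (by norm_num)) _) _
  -- case N = 0
  rcases eq_or_ne N 0 with hN0 | hN0
  · have hPz : P = 0 := by
      rw [hPdef, hΩdef, tonelli_yx L _ meas2q]
      rw [hNrw] at hN0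
      have hae := (lintegral_eq_zero_iff h𝔅meas).mp hN0
      rw [← lintegral_zero (μ := volume.restrict (Set.Ioo (0:ℝ) L))]
      apply lintegral_congr_ae
      filter_upwards [hae] with y hy
      have hxae := (lintegral_eq_zero_iff
        ((cont_abs_rpow (hvc.comp (Continuous.prodMk_left y)) hq0.le).measurable.ennreal_ofReal
          : Measurable fun x : ℝ => ENNReal.ofReal (|v (x, y)| ^ q))).mp hy
      rw [← lintegral_zero (μ := (volume : Measure ℝ))]
      apply lintegral_congr_ae
      filter_upwards [hxae] with x hx
      simp only [Pi.zero_apply] at hx ⊢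
      have h0 : |v (x, y)| ^ q ≤ 0 := ENNReal.ofReal_eq_zero.mp hx
      have h1 : |v (x, y)| = 0 := by
        by_contra hne
        have : 0 < |v (x, y)| ^ q := Real.rpow_pos_of_pos (abs_pos.mpr (by simpa using hne)) q
        linarith
      rw [ENNReal.ofReal_eq_zero]
      rw [h1, Real.zero_rpow (by positivity)]
    rw [hPz]
    exact zero_le
  -- N ≠ 0 : choose y₀
  have hNIoofin : (∫⁻ y in Set.Ioo (0:ℝ) L, 𝔅 y) ≠ ⊤ := by rw [← hNrw]; exact hNfin
  have hy₀ : ∃ y₀ ∈ Set.Ioo (0:ℝ) L, 𝔅 y₀ ≤ 2 * N / ENNReal.ofReal L := by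
    by_contra hcon
    push_neg at hcon
    have hlow : ∫⁻ y in Set.Ioo (0:ℝ) L, (2 * N / ENNReal.ofReal L)
        ≤ ∫⁻ y in Set.Ioo (0:ℝ) L, 𝔅 y :=
      setLIntegral_mono h𝔅meas fun y hy => (hcon y hy).le
    rw [setLIntegral_const, Real.volume_Ioo, sub_zero,
      ENNReal.div_mul_cancel (by simpa using hL) ENNReal.ofReal_ne_top] at hlow
    rw [← hNrw] at hlow
    have : N < 2 * N := by
      rw [two_mul]
      exact ENNReal.lt_add_right hNfin hN0
    exact absurd (hlow.trans_lt this) (lt_irrefl _)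
  obtain ⟨y₀, hy₀mem, hy₀le⟩ := hy₀
  set K := 2 * N / ENNReal.ofReal L + Iy with hKdef
  have h𝔅K : ∀ y ∈ Set.Ioo (0:ℝ) L, 𝔅 y ≤ K := by
    intro y hy
    have hpt : ∀ x : ℝ, ENNReal.ofReal (|v (x, y)| ^ q)
        ≤ ENNReal.ofReal (|v (x, y₀)| ^ q)
          + ∫⁻ t in Set.Ioo (0:ℝ) L, ENNReal.ofReal (ay (x, t)) := by
      intro x
      have hftc := ftc_piece hq (φ := fun b => v (x, b)) (dφ := fun b => vy (x, b))
        (hsly x) (hvyc.comp (Continuous.prodMk_right x)) y₀ y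
      refine hftc.trans (add_le_add_right ?_ _)
      refine lintegral_mono_set ?_
      intro t ht
      rcases ht with ⟨ht1, ht2⟩
      constructor
      · calc (0:ℝ) < min y₀ y := lt_min hy₀mem.1 hy.1
          _ < t := ht1
      · calc t ≤ max y₀ y := ht2
          _ < L := max_lt hy₀mem.2 hy.2
    calc 𝔅 y ≤ ∫⁻ x, (ENNReal.ofReal (|v (x, y₀)| ^ q)
          + ∫⁻ t in Set.Ioo (0:ℝ) L, ENNReal.ofReal (ay (x, t))) := lintegral_mono hpt
      _ = 𝔅 y₀ + ∫⁻ x, ∫⁻ t in Set.Ioo (0:ℝ) L, ENNReal.ofReal (ay (x, t)) := by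
          rw [lintegral_add_left]
          exact (cont_abs_rpow (hvc.comp (Continuous.prodMk_left y₀)) hq0.le).measurable.ennreal_ofReal
      _ = 𝔅 y₀ + Iy := by rw [← hIyrw]
      _ ≤ K := by rw [hKdef]; exact add_le_add_left hy₀le _
  -- main estimate
  have hAtmeas : Measurable fun y => ∫⁻ s, ENNReal.ofReal (ax (s, y)) := by
    apply Measurable.lintegral_prod_left (f := fun s y => ENNReal.ofReal (ax (s, y)))
    exact measax
  have h𝔅aefin : ∀ᵐ y ∂(volume.restrict (Set.Ioo (0:ℝ) L)), 𝔅 y < ⊤ :=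
    ae_lt_top h𝔅meas hNIoofin
  have hmainP : P ≤ Ix * K := by
    rw [hPdef, hΩdef, tonelli_yx L _ meas2q]
    have hstep : ∀ᵐ y ∂(volume.restrict (Set.Ioo (0:ℝ) L)),
        (∫⁻ x, ENNReal.ofReal (|v (x, y)| ^ (2*q)))
          ≤ (∫⁻ s, ENNReal.ofReal (ax (s, y))) * K := by
      filter_upwards [ae_restrict_mem measurableSet_Ioo, h𝔅aefin] with y hy hfin
      have hsb : ∀ x : ℝ, ENNReal.ofReal (|v (x, y)| ^ q)
          ≤ ∫⁻ s, ENNReal.ofReal (ax (s, y)) := by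
        intro x
        exact slice_bound hq (φ := fun a => v (a, y)) (dφ := fun a => vx (a, y))
          (hslx y) (hvxc.comp (Continuous.prodMk_left y)) hfin.ne x
      calc (∫⁻ x, ENNReal.ofReal (|v (x, y)| ^ (2*q)))
          ≤ ∫⁻ x, (∫⁻ s, ENNReal.ofReal (ax (s, y))) * ENNReal.ofReal (|v (x, y)| ^ q) := by
            apply lintegral_mono
            intro x
            show ENNReal.ofReal (|v (x, y)| ^ (2*q))
              ≤ (∫⁻ s, ENNReal.ofReal (ax (s, y))) * ENNReal.ofReal (|v (x, y)| ^ q)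
            have hsplit2 : ENNReal.ofReal (|v (x, y)| ^ (2*q))
                = ENNReal.ofReal (|v (x, y)| ^ q) * ENNReal.ofReal (|v (x, y)| ^ q) := by
              rw [← ENNReal.ofReal_mul (by positivity)]
              congr 1
              rw [show 2*q = q + q by ring,
                Real.rpow_add' (abs_nonneg _) (by intro h; linarith : q + q ≠ 0)]
            rw [hsplit2]
            exact mul_le_mul_left (hsb x) _
        _ = (∫⁻ s, ENNReal.ofReal (ax (s, y))) * 𝔅 y := by
            rw [lintegral_const_mul]
            exact (cont_abs_rpow (hvc.comp (Continuous.prodMk_left y)) hq0.le).measurable.ennreal_ofReal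
        _ ≤ (∫⁻ s, ENNReal.ofReal (ax (s, y))) * K := mul_le_mul_right (h𝔅K y hy) _
    calc (∫⁻ y in Set.Ioo (0:ℝ) L, ∫⁻ x, ENNReal.ofReal (|v (x, y)| ^ (2*q)))
        ≤ ∫⁻ y in Set.Ioo (0:ℝ) L, (∫⁻ s, ENNReal.ofReal (ax (s, y))) * K :=
          lintegral_mono_ae hstep
      _ = (∫⁻ y in Set.Ioo (0:ℝ) L, ∫⁻ s, ENNReal.ofReal (ax (s, y))) * K :=
          lintegral_mul_const K hAtmeas
      _ = Ix * K := by rw [hIxdef, hΩdef, tonelli_yx L _ measax]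
  -- final assembly
  set Q := ENNReal.ofReal q * (M ^ ((1:ℝ)/2) * E ^ ((1:ℝ)/2)) with hQdef
  have hfinal1 : P ≤ Q * (2 * N / ENNReal.ofReal L + Q) := by
    refine hmainP.trans (mul_le_mul' hIxle ?_)
    rw [hKdef]
    exact add_le_add_right hIyle _
  have hQfin : Q ≠ ⊤ := by
    rw [hQdef]
    exact ENNReal.mul_ne_top ENNReal.ofReal_ne_top
      (ENNReal.mul_ne_top (ENNReal.rpow_ne_top_of_nonneg (by norm_num) hMfin)
        (ENNReal.rpow_ne_top_of_nonneg (by norm_num) hE))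
  have hdivfin : 2 * N / ENNReal.ofReal L ≠ ⊤ :=
    (ENNReal.div_lt_top (ENNReal.mul_ne_top (by norm_num) hNfin) (by simpa using hL)).ne
  have hRHSfin : Q * (2 * N / ENNReal.ofReal L + Q) ≠ ⊤ :=
    ENNReal.mul_ne_top hQfin (ENNReal.add_ne_top.mpr ⟨hdivfin, hQfin⟩)
  have hQt : Q.toReal = q * (M.toReal ^ ((1:ℝ)/2) * E.toReal ^ ((1:ℝ)/2)) := by
    rw [hQdef, ENNReal.toReal_mul, ENNReal.toReal_mul, ENNReal.toReal_ofReal hq0.le,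
      ← ENNReal.toReal_rpow, ← ENNReal.toReal_rpow]
  have hdivt : (2 * N / ENNReal.ofReal L).toReal = 2 * N.toReal / L := by
    rw [ENNReal.toReal_div, ENNReal.toReal_mul, ENNReal.toReal_ofReal hL.le,
      ENNReal.toReal_ofNat]
  have hreal : P.toReal ≤ q * (M.toReal ^ ((1:ℝ)/2) * E.toReal ^ ((1:ℝ)/2))
      * (2 * N.toReal / L + q * (M.toReal ^ ((1:ℝ)/2) * E.toReal ^ ((1:ℝ)/2))) := by
    have h := ENNReal.toReal_mono hRHSfin hfinal1
    rwa [ENNReal.toReal_mul, ENNReal.toReal_add hdivfin hQfin, hQt, hdivt] at h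
  have hm2real : M.toReal ≤ E.toReal ^ (1/(q-1)) * P.toReal ^ (1-1/(q-1)) := by
    have hfinR : E ^ (1/(q-1)) * P ^ (1-1/(q-1)) ≠ ⊤ :=
      ENNReal.mul_ne_top (ENNReal.rpow_ne_top_of_nonneg (div_nonneg (by linarith) (by linarith)) hE)
        (ENNReal.rpow_ne_top_of_nonneg (by rw [sub_nonneg, div_le_one hq1]; linarith) hP)
    have h := ENNReal.toReal_mono hfinR hMle
    rwa [ENNReal.toReal_mul, ← ENNReal.toReal_rpow, ← ENNReal.toReal_rpow] at h
  have hn2real : N.toReal ≤ E.toReal ^ (q/(2*q-2)) * P.toReal ^ (1-q/(2*q-2)) := by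
    have hfinR : E ^ (q/(2*q-2)) * P ^ (1-q/(2*q-2)) ≠ ⊤ :=
      ENNReal.mul_ne_top (ENNReal.rpow_ne_top_of_nonneg (div_nonneg (by linarith) (by linarith)) hE)
        (ENNReal.rpow_ne_top_of_nonneg
          (by rw [sub_nonneg, div_le_one (by linarith : (0:ℝ) < 2*q-2)]; linarith) hP)
    have h := ENNReal.toReal_mono hfinR hNle
    rwa [ENNReal.toReal_mul, ← ENNReal.toReal_rpow, ← ENNReal.toReal_rpow] at h
  have habsorb := real_absorb L q P.toReal E.toReal M.toReal N.toReal hL hq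
    ENNReal.toReal_nonneg ENNReal.toReal_nonneg ENNReal.toReal_nonneg ENNReal.toReal_nonneg
    hreal hm2real hn2real
  calc P = ENNReal.ofReal P.toReal := (ENNReal.ofReal_toReal hP).symm
    _ ≤ ENNReal.ofReal ((2*q/L + q^2) ^ (q-1) * E.toReal ^ q) :=
        ENNReal.ofReal_le_ofReal habsorb
    _ = ENNReal.ofReal ((2*q/L + q^2) ^ (q-1)) * ENNReal.ofReal (E.toReal ^ q) :=
        ENNReal.ofReal_mul (by positivity)
    _ = ENNReal.ofReal ((2*q/L + q^2) ^ (q-1)) * E ^ q := by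
        rw [← ENNReal.ofReal_rpow_of_nonneg ENNReal.toReal_nonneg hq0.le,
          ENNReal.ofReal_toReal hE]

set_option maxHeartbeats 1000000 in
theorem stmt15 (L α : ℝ) (hL : 0 < L) (hα : 0 < α) (q : ℝ) (hq : 2 ≤ q) :
    ∃ C : ℝ, 0 ≤ C ∧ ∀ u : ℝ → ℝ → ℝ,
      ContDiff ℝ 1 (fun p : ℝ × ℝ => u p.1 p.2) →
      IntegrableOn (fun p : ℝ × ℝ =>
          ((u p.1 p.2) ^ 2 + (deriv (fun a => u a p.2) p.1) ^ 2
            + (deriv (fun y => u p.1 y) p.2) ^ 2) * (1 + max p.1 0) ^ (2 * α))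
        (Set.univ ×ˢ Set.Ioo 0 L) →
      (∫ p in (Set.univ ×ˢ Set.Ioo (0:ℝ) L : Set (ℝ × ℝ)),
          |u p.1 p.2| ^ (2 * q) * (1 + max p.1 0) ^ (2 * α * q))
        ≤ C * (∫ p in (Set.univ ×ˢ Set.Ioo (0:ℝ) L : Set (ℝ × ℝ)),
            ((u p.1 p.2) ^ 2 + (deriv (fun a => u a p.2) p.1) ^ 2
              + (deriv (fun y => u p.1 y) p.2) ^ 2) * (1 + max p.1 0) ^ (2 * α)) ^ q := by
  have hq0 : (0:ℝ) < q := by linarith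
  set c2 : ℝ := (2:ℝ) ^ α with hc2def
  have hc2pos : 0 < c2 := Real.rpow_pos_of_pos two_pos α
  set Kα : ℝ := c2^2 * (2 + 2*α^2) with hKαdef
  have hKαpos : 0 < Kα := by positivity
  set K1 : ℝ := (2*q/L + q^2) ^ (q-1) with hK1def
  have hK1nonneg : 0 ≤ K1 := by
    apply Real.rpow_nonneg
    positivity
  refine ⟨K1 * Kα ^ q, by positivity, ?_⟩
  intro u hu hInt
  set Ω : Set (ℝ × ℝ) := Set.univ ×ˢ Set.Ioo (0:ℝ) L with hΩdef
  set U : ℝ × ℝ → ℝ := fun p => u p.1 p.2 with hUdef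
  set V : ℝ × ℝ → ℝ := fun p => u p.1 p.2 * what α p.1 with hVdef
  have hV : ContDiff ℝ 1 V := hu.mul ((contDiff_what α).comp contDiff_fst)
  -- slice derivatives of U
  have hUdx : ∀ p : ℝ × ℝ, HasDerivAt (fun a => u a p.2) (fderiv ℝ U p (1,0)) p.1 := by
    intro p
    have h1 : HasDerivAt (fun a : ℝ => (a, p.2)) ((1:ℝ), (0:ℝ)) p.1 :=
      (hasDerivAt_id p.1).prodMk (hasDerivAt_const p.1 p.2)
    have h2 := ((hu.differentiable one_ne_zero) (p.1, p.2)).hasFDerivAt.comp_hasDerivAt p.1 h1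
    simpa [Function.comp_def, hUdef, Prod.mk.eta] using h2
  have hUdy : ∀ p : ℝ × ℝ, HasDerivAt (fun y => u p.1 y) (fderiv ℝ U p (0,1)) p.2 := by
    intro p
    have h1 : HasDerivAt (fun b : ℝ => (p.1, b)) ((0:ℝ), (1:ℝ)) p.2 :=
      (hasDerivAt_const p.2 p.1).prodMk (hasDerivAt_id p.2)
    have h2 := ((hu.differentiable one_ne_zero) (p.1, p.2)).hasFDerivAt.comp_hasDerivAt p.2 h1
    simpa [Function.comp_def, hUdef, Prod.mk.eta] using h2
  have hderiv_x : ∀ p : ℝ × ℝ, deriv (fun a => u a p.2) p.1 = fderiv ℝ U p (1,0) :=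
    fun p => (hUdx p).deriv
  have hderiv_y : ∀ p : ℝ × ℝ, deriv (fun y => u p.1 y) p.2 = fderiv ℝ U p (0,1) :=
    fun p => (hUdy p).deriv
  -- slice derivatives of V
  have hVdx : ∀ p : ℝ × ℝ, HasDerivAt (fun a => V (a, p.2)) (fderiv ℝ V p (1,0)) p.1 := by
    intro p
    have h1 : HasDerivAt (fun a : ℝ => (a, p.2)) ((1:ℝ), (0:ℝ)) p.1 :=
      (hasDerivAt_id p.1).prodMk (hasDerivAt_const p.1 p.2)
    have h2 := ((hV.differentiable one_ne_zero) (p.1, p.2)).hasFDerivAt.comp_hasDerivAt p.1 h1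
    simpa [Function.comp_def, Prod.mk.eta] using h2
  have hVdy : ∀ p : ℝ × ℝ, HasDerivAt (fun b => V (p.1, b)) (fderiv ℝ V p (0,1)) p.2 := by
    intro p
    have h1 : HasDerivAt (fun b : ℝ => (p.1, b)) ((0:ℝ), (1:ℝ)) p.2 :=
      (hasDerivAt_const p.2 p.1).prodMk (hasDerivAt_id p.2)
    have h2 := ((hV.differentiable one_ne_zero) (p.1, p.2)).hasFDerivAt.comp_hasDerivAt p.2 h1
    simpa [Function.comp_def, Prod.mk.eta] using h2
  have hVxeq : ∀ p : ℝ × ℝ, fderiv ℝ V p (1,0)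
      = fderiv ℝ U p (1,0) * what α p.1 + u p.1 p.2 * whatd α p.1 := by
    intro p
    have hprod : HasDerivAt (fun a => V (a, p.2))
        (fderiv ℝ U p (1,0) * what α p.1 + u p.1 p.2 * whatd α p.1) p.1 := by
      have := (hUdx p).mul (hasDerivAt_what α p.1)
      simpa [hVdef, Pi.mul_def] using this
    exact (hVdx p).unique hprod
  have hVyeq : ∀ p : ℝ × ℝ, fderiv ℝ V p (0,1)
      = fderiv ℝ U p (0,1) * what α p.1 := by
    intro p
    have hprod : HasDerivAt (fun b => V (p.1, b))
        (fderiv ℝ U p (0,1) * what α p.1) p.2 := by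
      have := (hUdy p).mul_const (what α p.1)
      simpa [hVdef] using this
    exact (hVdy p).unique hprod
  -- weight squared bounds
  have hWsq : ∀ x : ℝ, ((1 + max x 0) ^ α)^2 = (1 + max x 0) ^ (2*α) := by
    intro x
    have hb : (0:ℝ) ≤ 1 + max x 0 := by positivity
    rw [← Real.rpow_natCast ((1 + max x 0) ^ α) 2, ← Real.rpow_mul hb]
    norm_num [mul_comm]
  have hwhatsq : ∀ x : ℝ, (what α x)^2 ≤ c2^2 * (1 + max x 0) ^ (2*α) := by
    intro x
    have h1 : what α x ≤ c2 * (1 + max x 0) ^ α := what_le_weight hα.le x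
    have h2 : (what α x)^2 ≤ (c2 * (1 + max x 0) ^ α)^2 := by
      apply pow_le_pow_left₀ (what_pos α x).le h1
    calc (what α x)^2 ≤ (c2 * (1 + max x 0) ^ α)^2 := h2
      _ = c2^2 * ((1 + max x 0) ^ α)^2 := by ring
      _ = c2^2 * (1 + max x 0) ^ (2*α) := by rw [hWsq]
  -- pointwise E bound
  have hEpt : ∀ p : ℝ × ℝ, (V p)^2 + (fderiv ℝ V p (1,0))^2 + (fderiv ℝ V p (0,1))^2
      ≤ Kα * (((U p)^2 + (fderiv ℝ U p (1,0))^2 + (fderiv ℝ U p (0,1))^2)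
          * (1 + max p.1 0) ^ (2*α)) := by
    intro p
    rw [hVxeq p, hVyeq p]
    set w := what α p.1
    set wd := whatd α p.1
    set a := u p.1 p.2
    set b := fderiv ℝ U p (1,0)
    set c := fderiv ℝ U p (0,1)
    set W := (1 + max p.1 0) ^ (2*α) with hWdef
    have hw0 : 0 ≤ w := (what_pos α p.1).le
    have hwd0 : 0 ≤ wd := whatd_nonneg hα.le p.1
    have hwd1 : wd ≤ α * w := whatd_le hα.le p.1
    have hwsq : w^2 ≤ c2^2 * W := hwhatsq p.1
    have hW0 : 0 ≤ W := by rw [hWdef]; positivity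
    have hVp : V p = a * w := rfl
    have hUp : U p = a := rfl
    rw [hVp, hUp]
    have h1 : (b*w + a*wd)^2 ≤ 2*(b*w)^2 + 2*(a*wd)^2 := by nlinarith [sq_nonneg (b*w - a*wd)]
    have h2 : wd^2 ≤ α^2 * w^2 := by nlinarith
    have h3 : (a*w)^2 + (b*w + a*wd)^2 + (c*w)^2
        ≤ (2 + 2*α^2) * (a^2 + b^2 + c^2) * w^2 := by nlinarith [sq_nonneg a, sq_nonneg b, sq_nonneg c, sq_nonneg (a*wd), sq_nonneg w, mul_nonneg (sq_nonneg a) (sq_nonneg w)]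
    calc (a*w)^2 + (b*w + a*wd)^2 + (c*w)^2
        ≤ (2 + 2*α^2) * (a^2 + b^2 + c^2) * w^2 := h3
      _ ≤ (2 + 2*α^2) * (a^2 + b^2 + c^2) * (c2^2 * W) := by
          apply mul_le_mul_of_nonneg_left hwsq (by positivity)
      _ = Kα * ((a^2 + b^2 + c^2) * W) := by rw [hKαdef]; ring
  -- pointwise LHS bounds
  have habsV : ∀ p : ℝ × ℝ, |V p| = |u p.1 p.2| * what α p.1 := by
    intro p
    rw [hVdef, abs_mul, abs_of_pos (what_pos α p.1)]
  have hLpt : ∀ p : ℝ × ℝ, |u p.1 p.2| ^ (2*q) * (1 + max p.1 0) ^ (2*α*q)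
      ≤ |V p| ^ (2*q) := by
    intro p
    rw [habsV p, Real.mul_rpow (abs_nonneg _) (what_pos α p.1).le]
    apply mul_le_mul_of_nonneg_left _ (Real.rpow_nonneg (abs_nonneg _) _)
    calc (1 + max p.1 0) ^ (2*α*q) = ((1 + max p.1 0) ^ α) ^ (2*q) := by
          rw [← Real.rpow_mul (by positivity : (0:ℝ) ≤ 1 + max p.1 0),
            show α * (2*q) = 2*α*q by ring]
      _ ≤ (what α p.1) ^ (2*q) :=
          Real.rpow_le_rpow (by positivity) (weight_le_what hα.le p.1) (by linarith)
  have hLpt2 : ∀ p : ℝ × ℝ, |V p| ^ (2*q)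
      ≤ c2 ^ (2*q) * (|u p.1 p.2| ^ (2*q) * (1 + max p.1 0) ^ (2*α*q)) := by
    intro p
    rw [habsV p, Real.mul_rpow (abs_nonneg _) (what_pos α p.1).le]
    rw [show c2 ^ (2*q) * (|u p.1 p.2| ^ (2*q) * (1 + max p.1 0) ^ (2*α*q))
      = |u p.1 p.2| ^ (2*q) * (c2 ^ (2*q) * (1 + max p.1 0) ^ (2*α*q)) by ring]
    apply mul_le_mul_of_nonneg_left _ (Real.rpow_nonneg (abs_nonneg _) _)
    calc (what α p.1) ^ (2*q) ≤ (c2 * (1 + max p.1 0) ^ α) ^ (2*q) :=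
          Real.rpow_le_rpow (what_pos α p.1).le (what_le_weight hα.le p.1) (by linarith)
      _ = c2 ^ (2*q) * ((1 + max p.1 0) ^ α) ^ (2*q) :=
          Real.mul_rpow hc2pos.le (by positivity)
      _ = c2 ^ (2*q) * (1 + max p.1 0) ^ (2*α*q) := by
          rw [← Real.rpow_mul (by positivity : (0:ℝ) ≤ 1 + max p.1 0),
            show α * (2*q) = 2*α*q by ring]
  -- continuity facts
  have hUc : Continuous U := hu.continuous
  have hUxc : Continuous fun p : ℝ × ℝ => fderiv ℝ U p (1,0) :=
    (hu.continuous_fderiv one_ne_zero).clm_apply continuous_const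
  have hUyc : Continuous fun p : ℝ × ℝ => fderiv ℝ U p (0,1) :=
    (hu.continuous_fderiv one_ne_zero).clm_apply continuous_const
  have hbasec : Continuous fun p : ℝ × ℝ => 1 + max p.1 0 :=
    continuous_const.add (continuous_fst.max continuous_const)
  have hW2c : Continuous fun p : ℝ × ℝ => (1 + max p.1 0) ^ (2*α) := by
    rw [continuous_iff_continuousAt]; intro p
    exact (Real.continuousAt_rpow_const _ _ (Or.inr (by positivity))).comp hbasec.continuousAt
  have hW2qc : Continuous fun p : ℝ × ℝ => (1 + max p.1 0) ^ (2*α*q) := by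
    rw [continuous_iff_continuousAt]; intro p
    exact (Real.continuousAt_rpow_const _ _ (Or.inr (by positivity))).comp hbasec.continuousAt
  -- rewrite the deriv form
  have hfunR : (fun p : ℝ × ℝ => ((u p.1 p.2) ^ 2 + (deriv (fun a => u a p.2) p.1) ^ 2
        + (deriv (fun y => u p.1 y) p.2) ^ 2) * (1 + max p.1 0) ^ (2 * α))
      = fun p : ℝ × ℝ => ((U p)^2 + (fderiv ℝ U p (1,0))^2 + (fderiv ℝ U p (0,1))^2)
          * (1 + max p.1 0) ^ (2*α) := by
    funext p
    rw [hderiv_x p, hderiv_y p]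
  rw [hfunR] at hInt ⊢
  have heUWc : Continuous fun p : ℝ × ℝ =>
      ((U p)^2 + (fderiv ℝ U p (1,0))^2 + (fderiv ℝ U p (0,1))^2) * (1 + max p.1 0) ^ (2*α) :=
    (((hUc.pow 2).add (hUxc.pow 2)).add (hUyc.pow 2)).mul hW2c
  have hLc : Continuous fun p : ℝ × ℝ => |u p.1 p.2| ^ (2*q) * (1 + max p.1 0) ^ (2*α*q) := by
    apply Continuous.mul _ hW2qc
    exact cont_abs_rpow (show Continuous fun p : ℝ × ℝ => u p.1 p.2 from hu.continuous)
      (by linarith)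
  set R := ∫ p in Ω, ((U p)^2 + (fderiv ℝ U p (1,0))^2 + (fderiv ℝ U p (0,1))^2)
      * (1 + max p.1 0) ^ (2*α) with hRdef
  have hRnonneg : 0 ≤ R := by
    apply integral_nonneg
    intro p
    have h1 : (0:ℝ) ≤ (1 + max p.1 0) ^ (2*α) := Real.rpow_nonneg (by positivity) _
    positivity
  have hRlint : ENNReal.ofReal R = ∫⁻ p in Ω,
      ENNReal.ofReal (((U p)^2 + (fderiv ℝ U p (1,0))^2 + (fderiv ℝ U p (0,1))^2)
        * (1 + max p.1 0) ^ (2*α)) := by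
    apply ofReal_integral_eq_lintegral_ofReal hInt
    apply Filter.Eventually.of_forall
    intro p
    have h1 : (0:ℝ) ≤ (1 + max p.1 0) ^ (2*α) := Real.rpow_nonneg (by positivity) _
    positivity
  -- E for V
  set EV := ∫⁻ p in Ω, ENNReal.ofReal
      ((V p)^2 + (fderiv ℝ V p (1,0))^2 + (fderiv ℝ V p (0,1))^2) with hEVdef
  have hEVle : EV ≤ ENNReal.ofReal Kα * ENNReal.ofReal R := by
    rw [hRlint, ← lintegral_const_mul _ heUWc.measurable.ennreal_ofReal]
    apply lintegral_mono
    intro p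
    show ENNReal.ofReal ((V p)^2 + (fderiv ℝ V p (1,0))^2 + (fderiv ℝ V p (0,1))^2)
      ≤ ENNReal.ofReal Kα * ENNReal.ofReal
        (((U p)^2 + (fderiv ℝ U p (1,0))^2 + (fderiv ℝ U p (0,1))^2)
          * (1 + max p.1 0) ^ (2*α))
    rw [← ENNReal.ofReal_mul hKαpos.le]
    exact ENNReal.ofReal_le_ofReal (hEpt p)
  have hEVfin : EV ≠ ⊤ :=
    ne_top_of_le_ne_top (ENNReal.mul_ne_top ENNReal.ofReal_ne_top ENNReal.ofReal_ne_top) hEVle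
  -- case split on LHS integrability
  by_cases hIntL : IntegrableOn
      (fun p : ℝ × ℝ => |u p.1 p.2| ^ (2*q) * (1 + max p.1 0) ^ (2*α*q)) Ω
  · set S := ∫ p in Ω, |u p.1 p.2| ^ (2*q) * (1 + max p.1 0) ^ (2*α*q) with hSdef
    have hSnonneg : ∀ p : ℝ × ℝ, 0 ≤ |u p.1 p.2| ^ (2*q) * (1 + max p.1 0) ^ (2*α*q) := by
      intro p
      have h1 : (0:ℝ) ≤ (1 + max p.1 0) ^ (2*α*q) := Real.rpow_nonneg (by positivity) _
      positivity
    have hSlint : ENNReal.ofReal S = ∫⁻ p in Ω,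
        ENNReal.ofReal (|u p.1 p.2| ^ (2*q) * (1 + max p.1 0) ^ (2*α*q)) :=
      ofReal_integral_eq_lintegral_ofReal hIntL (Filter.Eventually.of_forall hSnonneg)
    set PV := ∫⁻ p in Ω, ENNReal.ofReal (|V p| ^ (2*q)) with hPVdef
    have hPVle : PV ≤ ENNReal.ofReal (c2 ^ (2*q)) * ENNReal.ofReal S := by
      rw [hSlint, ← lintegral_const_mul _ hLc.measurable.ennreal_ofReal]
      apply lintegral_mono
      intro p
      show ENNReal.ofReal (|V p| ^ (2*q)) ≤ ENNReal.ofReal (c2 ^ (2*q))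
        * ENNReal.ofReal (|u p.1 p.2| ^ (2*q) * (1 + max p.1 0) ^ (2*α*q))
      rw [← ENNReal.ofReal_mul (Real.rpow_nonneg hc2pos.le _)]
      exact ENNReal.ofReal_le_ofReal (hLpt2 p)
    have hPVfin : PV ≠ ⊤ :=
      ne_top_of_le_ne_top (ENNReal.mul_ne_top ENNReal.ofReal_ne_top ENNReal.ofReal_ne_top)
        hPVle
    have hcore := core L q hL hq V hV hEVfin hPVfin
    have hchain : ENNReal.ofReal S ≤ ENNReal.ofReal (K1 * (Kα * R) ^ q) := by
      calc ENNReal.ofReal S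
          = ∫⁻ p in Ω, ENNReal.ofReal (|u p.1 p.2| ^ (2*q) * (1 + max p.1 0) ^ (2*α*q)) :=
            hSlint
        _ ≤ PV := lintegral_mono fun p => ENNReal.ofReal_le_ofReal (hLpt p)
        _ ≤ ENNReal.ofReal K1 * EV ^ q := hcore
        _ ≤ ENNReal.ofReal K1 * (ENNReal.ofReal Kα * ENNReal.ofReal R) ^ q :=
            mul_le_mul_right (ENNReal.rpow_le_rpow hEVle hq0.le) _
        _ = ENNReal.ofReal (K1 * (Kα * R) ^ q) := by
            rw [← ENNReal.ofReal_mul hKαpos.le,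
              ENNReal.ofReal_rpow_of_nonneg (mul_nonneg hKαpos.le hRnonneg) hq0.le,
              ← ENNReal.ofReal_mul hK1nonneg]
    have hSle : S ≤ K1 * (Kα * R) ^ q :=
      (ENNReal.ofReal_le_ofReal_iff
        (mul_nonneg hK1nonneg (Real.rpow_nonneg (mul_nonneg hKαpos.le hRnonneg) q))).mp
        hchain
    calc S ≤ K1 * (Kα * R) ^ q := hSle
      _ = K1 * Kα ^ q * R ^ q := by
          rw [Real.mul_rpow hKαpos.le hRnonneg]; ring
  · rw [integral_undef hIntL]
    apply mul_nonneg
    · exact mul_nonneg hK1nonneg (Real.rpow_nonneg hKαpos.le q)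
    · exact Real.rpow_nonneg hRnonneg q
end
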